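/- arXiv:1906.09729 — 6 statements merged into one kernel-verified Lean document; each statement's English description precedes it below -/
import Mathlib

section
/- Let L be an integrable real random variable on a probability space (Ω,𝓕,P), let 0 < a < 1 and 0 ≤ b < 1, and set λ(a,b) = (1−a)/(1−ab). Then the infimum defining the optimized certainty equivalent R_{a,b}(L) = inf{ m + E[ℓ_{a,b}(L−m)] : m ∈ ℝ } is attained at m* = q_L(λ(a,b)); that is, R_{a,b}(L) = q_L(λ(a,b)) + E[ℓ_{a,b}(L − q_L(λ(a,b)))]. -/
open MeasureTheory Filter Topology Real Set
open scoped ENNReal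

/-- Left-quantile function: `q_L(u) = inf {m : P[L ≤ m] ≥ u}`. -/
noncomputable def leftQuantile {Ω : Type*} [MeasurableSpace Ω] (P : Measure Ω)
    (L : Ω → ℝ) (u : ℝ) : ℝ :=
  sInf {m : ℝ | u ≤ (P {ω | L ω ≤ m}).toReal}

/-- Expected shortfall: `ES_α(L) = (1/(1-α)) ∫_α^1 q_L(u) du`. -/
noncomputable def ES {Ω : Type*} [MeasurableSpace Ω] (P : Measure Ω)
    (L : Ω → ℝ) (α : ℝ) : ℝ :=
  (1 - α)⁻¹ * ∫ u in α..1, leftQuantile P L u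

/-- The α-expectile is the (unique) `e` with `α E[(L-e)⁺] = (1-α) E[(L-e)⁻]`. -/
def IsExpectile {Ω : Type*} [MeasurableSpace Ω] (P : Measure Ω)
    (L : Ω → ℝ) (α e : ℝ) : Prop :=
  α * ∫ ω, max (L ω - e) 0 ∂P = (1 - α) * ∫ ω, max (e - L ω) 0 ∂P

/-- Loss function `ℓ_{a,b}(x) = x⁺/a - b x⁻`. -/
noncomputable def lossFn (a b x : ℝ) : ℝ := max x 0 / a - b * max (-x) 0

/-- Optimized certainty equivalent `R_{a,b}(L) = inf { m + E[ℓ_{a,b}(L-m)] }`. -/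
noncomputable def OCE {Ω : Type*} [MeasurableSpace Ω] (P : Measure Ω)
    (L : Ω → ℝ) (a b : ℝ) : ℝ :=
  sInf {r : ℝ | ∃ m : ℝ, r = m + ∫ ω, lossFn a b (L ω - m) ∂P}

/-- `g` is regularly varying at infinity with index `ρ`. -/
def RegularlyVarying (g : ℝ → ℝ) (ρ : ℝ) : Prop :=
  ∀ x : ℝ, 0 < x → Tendsto (fun t => g (t * x) / g t) atTop (𝓝 (x ^ ρ))

/-- `g` is of second-order regular variation with indices `-η`, `ρ` and auxiliary function `A`. -/
def SecondOrderRV (g : ℝ → ℝ) (η ρ : ℝ) (A : ℝ → ℝ) : Prop :=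
  RegularlyVarying g (-η) ∧
  Tendsto A atTop (𝓝 0) ∧
  ((∀ᶠ t in atTop, 0 < A t) ∨ (∀ᶠ t in atTop, A t < 0)) ∧
  ∀ x : ℝ, 0 < x →
    Tendsto (fun t => (g (t * x) / g t - x ^ (-η)) / A t) atTop
      (𝓝 (if ρ = 0 then x ^ (-η) * Real.log x else x ^ (-η) * (x ^ ρ - 1) / ρ))

/-- Empirical measure `(1/n) ∑_{k<n} δ_{L_k(ω)}` of the first `n` samples. -/
noncomputable def empMeasure {Ω : Type*} [MeasurableSpace Ω] (L : ℕ → Ω → ℝ)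
    (n : ℕ) (ω : Ω) : Measure ℝ :=
  (n : ℝ≥0∞)⁻¹ • ∑ k ∈ Finset.range n, Measure.dirac (L k ω)

/-!
Since `ℓ_{a,b}(x) = b x + (1/a - b) x⁺`, the objective `m + E[ℓ_{a,b}(L - m)]` equals
`b E[L] + (1/a - b) ((1 - λ) m + E[(L - m)⁺])` with `λ = λ(a,b)`, and `1/a - b > 0`.
The bracket is the pinball risk of the law of `L` at level `λ`, minimised at the left
`λ`-quantile `q`: moving `m` away from `q` changes `E[(L - m)⁺]` at rate at least
`P[L > q] ≤ 1 - λ` to the right of `q` and `P[L ≥ q] ≥ 1 - λ` to the left of it.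
-/

open ProbabilityTheory Function

lemma lossFn_eq {a : ℝ} (ha : a ≠ 0) (b x : ℝ) :
    lossFn a b x = b * x + (1 / a - b) * max x 0 := by
  have hneg : max (-x) 0 = max x 0 - x := by
    rcases le_total x 0 with h | h
    · rw [max_eq_left (neg_nonneg.2 h), max_eq_right h]; ring
    · rw [max_eq_right (neg_nonpos.2 h), max_eq_left h]; ring
  rw [lossFn, hneg]
  field_simp
  ring

lemma posPart_sub_add_mul_indicator_Ioi_le (q m x : ℝ) :
    max (x - q) 0 + (q - m) * (Ioi q).indicator 1 x ≤ max (x - m) 0 := by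
  rw [indicator_apply]
  split_ifs with hx
  · rw [mem_Ioi] at hx
    rw [Pi.one_apply, mul_one, max_eq_left (by linarith)]
    linarith [le_max_left (x - m) 0]
  · rw [mem_Ioi, not_lt] at hx
    rw [mul_zero, add_zero, max_eq_right (by linarith)]
    exact le_max_right _ _

lemma posPart_sub_add_mul_indicator_Ici_le (q m x : ℝ) :
    max (x - q) 0 + (q - m) * (Ici q).indicator 1 x ≤ max (x - m) 0 := by
  rw [indicator_apply]
  split_ifs with hx
  · rw [mem_Ici] at hx
    rw [Pi.one_apply, mul_one, max_eq_left (by linarith)]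
    linarith [le_max_left (x - m) 0]
  · rw [mem_Ici, not_le] at hx
    rw [mul_zero, add_zero, max_eq_right (by linarith)]
    exact le_max_right _ _

noncomputable def cdfQuantile (μ : Measure ℝ) (u : ℝ) : ℝ :=
  sInf {m : ℝ | u ≤ cdf μ m}

noncomputable def pinballRisk (μ : Measure ℝ) (u m : ℝ) : ℝ :=
  (1 - u) * m + ∫ x, max (x - m) 0 ∂μ

section Quantile

variable {μ : Measure ℝ} {u : ℝ}

lemma bddBelow_setOf_le_cdf (hu : 0 < u) : BddBelow {m : ℝ | u ≤ cdf μ m} := by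
  obtain ⟨M, hM⟩ :=
    eventually_atBot.1 ((tendsto_cdf_atBot μ).eventually (eventually_lt_nhds hu))
  exact ⟨M, fun m hm => le_of_not_gt fun hmM => (hM m hmM.le).not_ge hm⟩

lemma setOf_le_cdf_nonempty (hu : u < 1) : {m : ℝ | u ≤ cdf μ m}.Nonempty :=
  ((tendsto_cdf_atTop μ).eventually (eventually_ge_nhds hu)).exists

lemma le_cdf_cdfQuantile (hu0 : 0 < u) (hu1 : u < 1) : u ≤ cdf μ (cdfQuantile μ u) := by
  have hright : ∀ m > cdfQuantile μ u, u ≤ cdf μ m := fun m hm => by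
    obtain ⟨s, hs, hsm⟩ :=
      (csInf_lt_iff (bddBelow_setOf_le_cdf hu0) (setOf_le_cdf_nonempty hu1)).1 hm
    exact hs.trans (monotone_cdf μ hsm.le)
  exact ge_of_tendsto (((cdf μ).right_continuous _).tendsto.mono_left
    (nhdsWithin_mono _ Ioi_subset_Ici_self)) (eventually_nhdsWithin_of_forall hright)

lemma leftLim_cdf_cdfQuantile_le (hu : 0 < u) : leftLim (cdf μ) (cdfQuantile μ u) ≤ u := by
  have hleft : ∀ m < cdfQuantile μ u, cdf μ m ≤ u := fun m hm =>
    (not_le.1 (notMem_of_lt_csInf (s := {m | u ≤ cdf μ m}) hm (bddBelow_setOf_le_cdf hu))).le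
  exact le_of_tendsto ((monotone_cdf μ).tendsto_leftLim _) (eventually_nhdsWithin_of_forall hleft)

lemma measureReal_Iio_eq_leftLim_cdf [IsProbabilityMeasure μ] (x : ℝ) :
    μ.real (Iio x) = leftLim (cdf μ) x := by
  have h := (cdf μ).measure_Iio (tendsto_cdf_atBot μ) x
  rw [measure_cdf, sub_zero] at h
  rw [measureReal_def, h, ENNReal.toReal_ofReal]
  exact (cdf_nonneg μ _).trans ((monotone_cdf μ).le_leftLim (sub_one_lt x))

lemma measureReal_Ioi_cdfQuantile_le [IsProbabilityMeasure μ] (hu0 : 0 < u) (hu1 : u < 1) :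
    μ.real (Ioi (cdfQuantile μ u)) ≤ 1 - u := by
  rw [← compl_Iic, probReal_compl_eq_one_sub measurableSet_Iic, ← cdf_eq_real]
  linarith [le_cdf_cdfQuantile (μ := μ) hu0 hu1]

lemma le_measureReal_Ici_cdfQuantile [IsProbabilityMeasure μ] (hu : 0 < u) :
    1 - u ≤ μ.real (Ici (cdfQuantile μ u)) := by
  rw [← compl_Iio, probReal_compl_eq_one_sub measurableSet_Iio, measureReal_Iio_eq_leftLim_cdf]
  linarith [leftLim_cdf_cdfQuantile_le (μ := μ) hu]

lemma integrable_posPart_sub [IsFiniteMeasure μ] (hμ : Integrable id μ) (m : ℝ) :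
    Integrable (fun x => max (x - m) 0) μ :=
  (hμ.sub (integrable_const m)).pos_part

lemma integral_posPart_sub_add_mul_le [IsFiniteMeasure μ] {s : Set ℝ} {q m : ℝ}
    (hμ : Integrable id μ) (hs : MeasurableSet s)
    (h : ∀ x, max (x - q) 0 + (q - m) * s.indicator 1 x ≤ max (x - m) 0) :
    ∫ x, max (x - q) 0 ∂μ + (q - m) * μ.real s ≤ ∫ x, max (x - m) 0 ∂μ := by
  have hind : Integrable (fun x => (q - m) * s.indicator 1 x) μ :=
    ((integrable_const (1 : ℝ)).indicator hs).const_mul _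
  calc ∫ x, max (x - q) 0 ∂μ + (q - m) * μ.real s
      = ∫ x, (max (x - q) 0 + (q - m) * s.indicator 1 x) ∂μ := by
        rw [integral_add (integrable_posPart_sub hμ q) hind, integral_const_mul,
          integral_indicator_one hs]
    _ ≤ ∫ x, max (x - m) 0 ∂μ :=
        integral_mono ((integrable_posPart_sub hμ q).add hind) (integrable_posPart_sub hμ m) h

theorem pinballRisk_cdfQuantile_le [IsProbabilityMeasure μ] (hμ : Integrable id μ)
    (hu0 : 0 < u) (hu1 : u < 1) (m : ℝ) :
    pinballRisk μ u (cdfQuantile μ u) ≤ pinballRisk μ u m := by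
  set q := cdfQuantile μ u
  unfold pinballRisk
  rcases le_total q m with hqm | hmq
  · have hI := integral_posPart_sub_add_mul_le hμ measurableSet_Ioi
      (posPart_sub_add_mul_indicator_Ioi_le q m)
    nlinarith [measureReal_Ioi_cdfQuantile_le (μ := μ) hu0 hu1]
  · have hI := integral_posPart_sub_add_mul_le hμ measurableSet_Ici
      (posPart_sub_add_mul_indicator_Ici_le q m)
    nlinarith [le_measureReal_Ici_cdfQuantile (μ := μ) hu0]

end Quantile

section OCE

variable {Ω : Type*} [MeasurableSpace Ω] {P : Measure Ω} {L : Ω → ℝ} {a b : ℝ}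

lemma leftQuantile_eq_cdfQuantile_map [IsProbabilityMeasure P] (hL : AEMeasurable L P) (u : ℝ) :
    leftQuantile P L u = cdfQuantile (P.map L) u := by
  have := Measure.isProbabilityMeasure_map hL
  simp only [leftQuantile, cdfQuantile, cdf_eq_real,
    map_measureReal_apply_of_aemeasurable hL measurableSet_Iic]
  rfl

lemma add_integral_lossFn_eq [IsProbabilityMeasure P] (hL : Integrable L P) (ha : a ≠ 0)
    (hab : a * b ≠ 1) (m : ℝ) :
    m + ∫ ω, lossFn a b (L ω - m) ∂P =
      b * ∫ ω, L ω ∂P + (1 / a - b) * pinballRisk (P.map L) ((1 - a) / (1 - a * b)) m := by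
  have hmap : ∫ x, max (x - m) 0 ∂(P.map L) = ∫ ω, max (L ω - m) 0 ∂P :=
    integral_map hL.aemeasurable (by fun_prop)
  have hsub : Integrable (fun ω => L ω - m) P := hL.sub (integrable_const m)
  simp_rw [lossFn_eq ha]
  rw [pinballRisk, hmap, integral_add (hsub.const_mul b) (hsub.pos_part.const_mul _),
    integral_const_mul, integral_const_mul, integral_sub hL (integrable_const m),
    integral_const, probReal_univ, one_smul]
  have hlam : (1 / a - b) * (1 - (1 - a) / (1 - a * b)) = 1 - b := by
    have : 1 - a * b ≠ 0 := sub_ne_zero.2 (Ne.symm hab)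
    field_simp
    ring
  linear_combination (-m) * hlam

lemma OCE_eq_of_forall_le {m₀ : ℝ}
    (h : ∀ m, m₀ + ∫ ω, lossFn a b (L ω - m₀) ∂P ≤
      m + ∫ ω, lossFn a b (L ω - m) ∂P) :
    OCE P L a b = m₀ + ∫ ω, lossFn a b (L ω - m₀) ∂P :=
  IsLeast.csInf_eq ⟨⟨m₀, rfl⟩, by rintro r ⟨m, rfl⟩; exact h m⟩

end OCE

theorem oce_attained_at_quantile_general {Ω : Type*} [MeasurableSpace Ω] (P : Measure Ω)
    [IsProbabilityMeasure P] (L : Ω → ℝ) (hL : Integrable L P)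
    (a b : ℝ) (ha : 0 < a) (ha1 : a < 1) (hb1 : b < 1) :
    OCE P L a b =
      leftQuantile P L ((1 - a) / (1 - a * b)) +
        ∫ ω, lossFn a b (L ω - leftQuantile P L ((1 - a) / (1 - a * b))) ∂P := by
  have hab : a * b < 1 := by nlinarith
  have hu0 : 0 < (1 - a) / (1 - a * b) := div_pos (by linarith) (by linarith)
  have hu1 : (1 - a) / (1 - a * b) < 1 := (div_lt_one (by linarith)).2 (by nlinarith)
  have hc : 0 ≤ 1 / a - b := by
    rw [sub_nonneg, le_div_iff₀ ha]
    nlinarith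
  have hLmap : Integrable id (P.map L) :=
    (integrable_map_measure aestronglyMeasurable_id hL.aemeasurable).2 hL
  refine OCE_eq_of_forall_le fun m => ?_
  rw [add_integral_lossFn_eq hL ha.ne' hab.ne, add_integral_lossFn_eq hL ha.ne' hab.ne,
    leftQuantile_eq_cdfQuantile_map hL.aemeasurable]
  have := Measure.isProbabilityMeasure_map (μ := P) hL.aemeasurable
  gcongr
  exact pinballRisk_cdfQuantile_le hLmap hu0 hu1 m

/-- the infimum defining the optimized certainty equivalent is attained
at `m* = q_L(λ(a,b))` with `λ(a,b) = (1-a)/(1-a*b)`. -/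
theorem oce_attained_at_quantile {Ω : Type*} [MeasurableSpace Ω] (P : Measure Ω)
    [IsProbabilityMeasure P] (L : Ω → ℝ) (hL : Integrable L P)
    (a b : ℝ) (ha : 0 < a) (ha1 : a < 1) (hb : 0 ≤ b) (hb1 : b < 1) :
    OCE P L a b =
      leftQuantile P L ((1 - a) / (1 - a * b)) +
        ∫ ω, lossFn a b (L ω - leftQuantile P L ((1 - a) / (1 - a * b))) ∂P :=
  oce_attained_at_quantile_general P L hL a b ha ha1 hb1
end

section
/- Let L be an integrable real random variable on a probability space (Ω,𝓕,P) and let 0 < a < 1 and 0 ≤ b ≤ 1. Then the optimized certainty equivalent admits the dual representation R_{a,b}(L) = sup{ E[Z·L] : Z is a random variable with E[Z] = 1 and b ≤ Z ≤ 1/a almost surely }. -/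
open MeasureTheory Filter Topology Real Set
open scoped ENNReal

/-!
With `ℓ_{a,b}(x) = b x + (1/a - b) x⁺`, the pointwise inequality `z x ≤ ℓ_{a,b}(x)` for
`b ≤ z ≤ 1/a` together with `E[Z] = 1` gives `E[Z L] ≤ m + E[ℓ_{a,b}(L - m)]` for every `m`.
For `b < 1` equality is attained: let `v = (1 - b) / (1/a - b) ∈ (0, 1)`, pick `m` with
`P(L > m) ≤ v ≤ P(L ≥ m)` (a quantile), let `W` be the indicator of `{L > m}` plus a constant
`t ∈ [0, 1]` on the atom `{L = m}` tuned so that `E[W] = v`, and set `Z = b + (1/a - b) W`;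
then `Z (L - m) = ℓ_{a,b}(L - m)` pointwise. For `b = 1` the infimum need not be attained, but
`m + E[ℓ_{a,1}(L - m)] = E[L] + (1/a - 1) E[(L - m)⁺] → E[L]` as `m → ∞`, and `E[L]` is the
value of `Z = 1`.
-/

lemma lossFn_eq_mul_add_mul_max (a b x : ℝ) :
    lossFn a b x = b * x + (1 / a - b) * max x 0 := by
  unfold lossFn
  rcases le_total x 0 with hx | hx
  · rw [max_eq_right hx, max_eq_left (neg_nonneg.mpr hx)]; ring
  · rw [max_eq_left hx, max_eq_right (neg_nonpos.mpr hx)]; ring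

lemma mul_le_lossFn {a b z : ℝ} (hbz : b ≤ z) (hza : z ≤ 1 / a) (x : ℝ) :
    z * x ≤ lossFn a b x := by
  rw [lossFn_eq_mul_add_mul_max]
  rcases le_total x 0 with hx | hx
  · rw [max_eq_right hx]; nlinarith
  · rw [max_eq_left hx]; nlinarith

section Integrals

variable {α : Type*} [MeasurableSpace α] {μ : Measure α}

lemma integrable_lossFn_comp {f : α → ℝ} (hf : Integrable f μ) (a b : ℝ) :
    Integrable (fun x => lossFn a b (f x)) μ := by
  simp only [lossFn_eq_mul_add_mul_max]
  exact (hf.const_mul b).add (hf.pos_part.const_mul _)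

lemma integral_mul_eq_add_integral_mul_sub {Z f : α → ℝ} (hZ : ∫ x, Z x ∂μ = 1) (m : ℝ)
    (hZf : Integrable (fun x => Z x * (f x - m)) μ) :
    ∫ x, Z x * f x ∂μ = m + ∫ x, Z x * (f x - m) ∂μ := by
  -- a non-integrable function has Bochner integral `0`, so `∫ Z = 1` forces integrability
  have hZint : Integrable Z μ := Integrable.of_integral_ne_zero (by simp [hZ])
  calc ∫ x, Z x * f x ∂μ = ∫ x, (m * Z x + Z x * (f x - m)) ∂μ := by
        congr 1; ext x; ring
    _ = m + ∫ x, Z x * (f x - m) ∂μ := by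
        rw [integral_add (hZint.const_mul m) hZf, integral_const_mul, hZ, mul_one]

lemma tendsto_integral_max_sub_atTop {f : α → ℝ} (hf : Integrable f μ) :
    Tendsto (fun m => ∫ x, max (f x - m) 0 ∂μ) atTop (𝓝 0) := by
  have hlim : ∀ x, Tendsto (fun m => max (f x - m) 0) atTop (𝓝 0) := fun x =>
    tendsto_const_nhds.congr' <| (eventually_ge_atTop (f x)).mono fun m hm =>
      (max_eq_right (sub_nonpos.mpr hm)).symm
  simpa using tendsto_integral_filter_of_dominated_convergence (fun x => |f x|)
    (Eventually.of_forall fun m =>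
      ((hf.aemeasurable.sub_const m).max aemeasurable_const).aestronglyMeasurable)
    ((eventually_ge_atTop 0).mono fun m hm => ae_of_all _ fun x => by
      rw [Real.norm_eq_abs, abs_of_nonneg (le_max_right _ _)]
      exact max_le (by linarith [le_abs_self (f x)]) (abs_nonneg _))
    hf.abs (ae_of_all _ hlim)

end Integrals

section Quantile

open ProbabilityTheory

variable (μ : Measure ℝ) [IsProbabilityMeasure μ]

lemma exists_measureReal_Iio_le_le_Iic {u : ℝ} (hu0 : 0 < u) (hu1 : u < 1) :
    ∃ m, μ.real (Iio m) ≤ u ∧ u ≤ μ.real (Iic m) := by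
  set F := cdf μ
  set T := {x | u ≤ F x}
  obtain ⟨x₁, hx₁⟩ := ((tendsto_cdf_atTop μ).eventually (eventually_gt_nhds hu1)).exists
  obtain ⟨x₀, hx₀⟩ := eventually_atBot.mp
    ((tendsto_cdf_atBot μ).eventually (eventually_lt_nhds hu0))
  have hT : BddBelow T := ⟨x₀, fun x hx => le_of_not_ge fun hle => (hx₀ x hle).not_ge hx⟩
  refine ⟨sInf T, ?_, ?_⟩
  · have hleft : Function.leftLim F (sInf T) ≤ u :=
      le_of_tendsto (F.mono.tendsto_leftLim _) <| eventually_nhdsWithin_of_forall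
        fun x hx => le_of_lt <| not_le.mp fun h => notMem_of_lt_csInf hx hT h
    rw [← measure_cdf μ, measureReal_def, F.measure_Iio (tendsto_cdf_atBot μ), sub_zero,
      ENNReal.toReal_ofReal']
    exact max_le hleft hu0.le
  · rw [← cdf_eq_real]
    refine ge_of_tendsto ((F.right_continuous _).tendsto.mono_left
      (nhdsWithin_mono _ Ioi_subset_Ici_self)) <| eventually_nhdsWithin_of_forall fun x hx => ?_
    obtain ⟨s, hs, hsx⟩ := exists_lt_of_csInf_lt ⟨x₁, hx₁.le⟩ hx
    exact hs.trans (F.mono hsx.le)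

lemma exists_measureReal_Ioi_add_mul_singleton_eq {v : ℝ} (hv0 : 0 < v) (hv1 : v < 1) :
    ∃ m, ∃ t ∈ Icc (0 : ℝ) 1, μ.real (Ioi m) + t * μ.real {m} = v := by
  obtain ⟨m, hIio, hIic⟩ := exists_measureReal_Iio_le_le_Iic μ (sub_pos.mpr hv1) (by linarith)
  have hIoi : μ.real (Ioi m) = 1 - μ.real (Iic m) := by
    rw [← compl_Iic, probReal_compl_eq_one_sub measurableSet_Iic]
  have hsplit : μ.real (Iic m) = μ.real (Iio m) + μ.real {m} := by
    rw [← Iio_union_right, measureReal_union (by simp) (measurableSet_singleton m)]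
  have hv : v ∈ Icc (μ.real (Ioi m) + 0 * μ.real {m}) (μ.real (Ioi m) + 1 * μ.real {m}) :=
    ⟨by linarith, by linarith⟩
  obtain ⟨t, ht, hvt⟩ := intermediate_value_Icc zero_le_one
    (f := fun t => μ.real (Ioi m) + t * μ.real {m}) (by fun_prop) hv
  exact ⟨m, t, ht, hvt⟩

end Quantile

section Duality

variable {Ω : Type*} [MeasurableSpace Ω] {P : Measure Ω} [IsProbabilityMeasure P]

lemma exists_weight_integral_eq_mul_sub_eq_max {L : Ω → ℝ} (hL : AEMeasurable L P) {v : ℝ}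
    (hv0 : 0 < v) (hv1 : v < 1) :
    ∃ W : Ω → ℝ, Measurable W ∧ (∀ ω, W ω ∈ Icc (0 : ℝ) 1) ∧ ∫ ω, W ω ∂P = v ∧
      ∃ m, ∀ᵐ ω ∂P, W ω * (L ω - m) = max (L ω - m) 0 := by
  have := Measure.isProbabilityMeasure_map (μ := P) hL.measurable_mk.aemeasurable
  obtain ⟨m, t, ⟨ht0, ht1⟩, hmt⟩ :=
    exists_measureReal_Ioi_add_mul_singleton_eq (P.map (hL.mk L)) hv0 hv1
  set w : ℝ → ℝ := (Ioi m).indicator (fun _ => 1) + ({m} : Set ℝ).indicator (fun _ => t)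
    with hw
  have hw_meas : Measurable w :=
    (measurable_const.indicator measurableSet_Ioi).add
      (measurable_const.indicator (measurableSet_singleton m))
  have hw_apply : ∀ x, w x = if m < x then 1 else if x = m then t else 0 := fun x => by
    rcases lt_trichotomy x m with h | rfl | h
    · simp [hw, h.not_gt, h.ne]
    · simp [hw]
    · simp [hw, h, h.ne']
  refine ⟨fun ω => w (hL.mk L ω), hw_meas.comp hL.measurable_mk, fun ω => ?_, ?_, m, ?_⟩
  · simp only [hw_apply]
    split_ifs <;> simp [ht0, ht1]
  · rw [← integral_map hL.measurable_mk.aemeasurable hw_meas.aestronglyMeasurable, hw]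
    simp only [Pi.add_apply]
    rw [integral_add ((integrable_const 1).indicator measurableSet_Ioi)
        ((integrable_const t).indicator (measurableSet_singleton m)),
      integral_indicator_const _ measurableSet_Ioi,
      integral_indicator_const _ (measurableSet_singleton m), smul_eq_mul, smul_eq_mul, mul_one,
      mul_comm, hmt]
  · filter_upwards [hL.ae_eq_mk] with ω hω
    rw [← hω, hw_apply]
    rcases lt_trichotomy (L ω) m with h | h | h
    · simp [h.not_gt, h.ne, h.le]
    · simp [h]
    · simp [h, h.le]

lemma integral_mul_le_add_integral_lossFn {L Z : Ω → ℝ} (hL : Integrable L P) {a b : ℝ}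
    (hZ : ∫ ω, Z ω ∂P = 1) (hZb : ∀ᵐ ω ∂P, b ≤ Z ω ∧ Z ω ≤ 1 / a) (m : ℝ) :
    ∫ ω, Z ω * L ω ∂P ≤ m + ∫ ω, lossFn a b (L ω - m) ∂P := by
  have hLm := hL.sub (integrable_const m)
  have hZL : Integrable (fun ω => Z ω * (L ω - m)) P :=
    hLm.bdd_mul (Integrable.of_integral_ne_zero (by simp [hZ])).aestronglyMeasurable
      (hZb.mono fun ω h => abs_le_max_abs_abs h.1 h.2)
  rw [integral_mul_eq_add_integral_mul_sub hZ m hZL, add_le_add_iff_left]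
  exact integral_mono_ae hZL (integrable_lossFn_comp hLm a b)
    (hZb.mono fun ω h => mul_le_lossFn h.1 h.2 _)

lemma exists_density_integral_mul_eq_add_integral_lossFn {L : Ω → ℝ} (hL : Integrable L P)
    {a b : ℝ} (ha : 0 < a) (ha1 : a < 1) (hb1 : b < 1) :
    ∃ Z : Ω → ℝ, Measurable Z ∧ ∫ ω, Z ω ∂P = 1 ∧ (∀ ω, b ≤ Z ω ∧ Z ω ≤ 1 / a) ∧
      ∃ m, ∫ ω, Z ω * L ω ∂P = m + ∫ ω, lossFn a b (L ω - m) ∂P := by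
  have h1a : 1 < 1 / a := by rw [lt_div_iff₀ ha]; linarith
  set k := 1 / a - b
  have hk : 0 < k := by linarith
  have hv : 0 < (1 - b) / k := div_pos (by linarith) hk
  obtain ⟨W, hW, hW01, hWv, m, hWm⟩ := exists_weight_integral_eq_mul_sub_eq_max
    hL.aemeasurable hv ((div_lt_one hk).mpr (by linarith))
  have hWint : Integrable W P := Integrable.of_integral_ne_zero (hWv ▸ hv.ne')
  have hZ1 : ∫ ω, (b + k * W ω) ∂P = 1 := by
    rw [integral_add (integrable_const b) (hWint.const_mul k), integral_const_mul, hWv,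
      integral_const, probReal_univ, smul_eq_mul, one_mul]
    field_simp
    ring
  have hZL : ∀ᵐ ω ∂P, (b + k * W ω) * (L ω - m) = lossFn a b (L ω - m) := by
    filter_upwards [hWm] with ω h
    rw [lossFn_eq_mul_add_mul_max, ← h]
    ring
  refine ⟨fun ω => b + k * W ω, measurable_const.add (hW.const_mul k), hZ1, fun ω => ?_, m,
    ?_⟩
  · obtain ⟨h0, h1⟩ := hW01 ω
    constructor <;> nlinarith
  · rw [integral_mul_eq_add_integral_mul_sub hZ1 m
      ((integrable_lossFn_comp (hL.sub (integrable_const m)) a b).congr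
        (hZL.mono fun _ h => h.symm)), integral_congr_ae hZL]

lemma tendsto_add_integral_lossFn_one {L : Ω → ℝ} (hL : Integrable L P) (a : ℝ) :
    Tendsto (fun m => m + ∫ ω, lossFn a 1 (L ω - m) ∂P) atTop (𝓝 (∫ ω, L ω ∂P)) := by
  have hformula : ∀ m, m + ∫ ω, lossFn a 1 (L ω - m) ∂P
      = ∫ ω, L ω ∂P + (1 / a - 1) * ∫ ω, max (L ω - m) 0 ∂P := fun m => by
    have hLm : Integrable (fun ω => L ω - m) P := hL.sub (integrable_const m)
    simp only [lossFn_eq_mul_add_mul_max, one_mul]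
    rw [integral_add hLm (hLm.pos_part.const_mul _), integral_sub hL (integrable_const m),
      integral_const_mul, integral_const, probReal_univ, smul_eq_mul, one_mul]
    ring
  simp only [hformula]
  simpa using tendsto_const_nhds.add ((tendsto_integral_max_sub_atTop hL).const_mul (1 / a - 1))

end Duality

theorem oce_dual_representation_general {Ω : Type*} [MeasurableSpace Ω] (P : Measure Ω)
    [IsProbabilityMeasure P] (L : Ω → ℝ) (hL : Integrable L P)
    (a b : ℝ) (ha : 0 < a) (ha1 : a < 1) (hb1 : b ≤ 1) :
    OCE P L a b =
      sSup {r : ℝ | ∃ Z : Ω → ℝ, Measurable Z ∧ (∫ ω, Z ω ∂P) = 1 ∧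
        (∀ᵐ ω ∂P, b ≤ Z ω ∧ Z ω ≤ 1 / a) ∧ r = ∫ ω, Z ω * L ω ∂P} := by
  unfold OCE
  set I := {r : ℝ | ∃ m : ℝ, r = m + ∫ ω, lossFn a b (L ω - m) ∂P}
  set S := {r : ℝ | ∃ Z : Ω → ℝ, Measurable Z ∧ (∫ ω, Z ω ∂P) = 1 ∧
    (∀ᵐ ω ∂P, b ≤ Z ω ∧ Z ω ≤ 1 / a) ∧ r = ∫ ω, Z ω * L ω ∂P}
  have hweak : ∀ s ∈ S, ∀ r ∈ I, s ≤ r := by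
    rintro _ ⟨Z, -, hZ, hZb, rfl⟩ _ ⟨m, rfl⟩
    exact integral_mul_le_add_integral_lossFn hL hZ hZb m
  have h1a : 1 ≤ 1 / a := by rw [le_div_iff₀ ha]; linarith
  have hmean : ∫ ω, L ω ∂P ∈ S :=
    ⟨fun _ => 1, measurable_const, by simp, ae_of_all _ fun _ => ⟨hb1, h1a⟩, by simp⟩
  have hIbdd : BddBelow I := ⟨_, hweak _ hmean⟩
  have hSbdd : BddAbove S := ⟨_, fun s hs => hweak s hs _ ⟨0, rfl⟩⟩
  refine le_antisymm ?_ (csSup_le ⟨_, hmean⟩ fun s hs => le_csInf ⟨_, 0, rfl⟩ (hweak s hs))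
  rcases hb1.lt_or_eq with hb1 | rfl
  · obtain ⟨Z, hZ, hZ1, hZb, m, hm⟩ :=
      exists_density_integral_mul_eq_add_integral_lossFn hL ha ha1 hb1
    exact (csInf_le hIbdd ⟨m, hm⟩).trans (le_csSup hSbdd ⟨Z, hZ, hZ1, ae_of_all _ hZb, rfl⟩)
  · exact (ge_of_tendsto' (tendsto_add_integral_lossFn_one hL a)
      fun m => csInf_le hIbdd ⟨m, rfl⟩).trans (le_csSup hSbdd hmean)

/-- dual representation of the optimized certainty equivalent:
`R_{a,b}(L) = sup { E[Z·L] : E[Z] = 1, b ≤ Z ≤ 1/a a.s. }`. -/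
theorem oce_dual_representation {Ω : Type*} [MeasurableSpace Ω] (P : Measure Ω)
    [IsProbabilityMeasure P] (L : Ω → ℝ) (hL : Integrable L P)
    (a b : ℝ) (ha : 0 < a) (ha1 : a < 1) (hb : 0 ≤ b) (hb1 : b ≤ 1) :
    OCE P L a b =
      sSup {r : ℝ | ∃ Z : Ω → ℝ, Measurable Z ∧ (∫ ω, Z ω ∂P) = 1 ∧
        (∀ᵐ ω ∂P, b ≤ Z ω ∧ Z ω ≤ 1 / a) ∧ r = ∫ ω, Z ω * L ω ∂P} :=
  oce_dual_representation_general P L hL a b ha ha1 hb1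
end

section
/- Let L be an integrable real random variable on a probability space (Ω,𝓕,P) and let 1/2 < α < 1. Then the α-expectile admits the representation e_α(L) = sup{ (1−γ)·ES_{((1+γ)α−1)/((2α−1)γ)}(L) + γ·E[L] : (1−α)/α < γ < 1 }, and if L is not almost surely constant the supremum is attained at some γ in the open interval ((1−α)/α, 1). -/
open MeasureTheory Filter Topology Real Set
open scoped ENNReal

/-!
Pass to the law `μ` of `L`. Its left quantile `q` pushes Lebesgue measure on `(0, 1)` forward
to `μ`, so `E[(L - c)⁺] = ∫₀¹ (q u - c)⁺ du`, and `q ≤ c + (q - c)⁺` gives the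
Rockafellar–Uryasev bound `∫_β^1 q ≤ (1 - β) c + E[(L - c)⁺]`, with equality when
`P[L < c] ≤ β ≤ P[L ≤ c]`. At the level `β = β(γ)`, the expectile equation turns
`(1 - γ) ES_β(L) + γ E[L]` into `e` minus a positive multiple of the slack of this bound at
`c = e`, so every value is at most `e`. The expectile equation also forces `P[L < e] < 1` and
`P[L ≤ e] > 0`, so some `β ∈ (0, 1)` makes the slack vanish, and `γ ↦ β(γ)` maps
`((1 - α) / α, 1)` onto `(0, 1)`.
-/

open ProbabilityTheory

section Quantile

variable {μ : Measure ℝ} [IsProbabilityMeasure μ] {u c : ℝ}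

theorem leftQuantile_le_iff (hu0 : 0 < u) (hu1 : u < 1) :
    leftQuantile μ id u ≤ c ↔ u ≤ cdf μ c := by
  have hS : {m : ℝ | u ≤ (μ {x | id x ≤ m}).toReal} = {m | u ≤ cdf μ m} := by
    ext m
    simp [cdf_eq_real, measureReal_def, Iic_def]
  unfold leftQuantile
  rw [hS]
  have hne : {m | u ≤ cdf μ m}.Nonempty :=
    ((tendsto_cdf_atTop μ).eventually (eventually_ge_nhds hu1)).exists
  have hbdd : BddBelow {m | u ≤ cdf μ m} := by
    obtain ⟨M, hM⟩ :=
      ((tendsto_cdf_atBot μ).eventually (eventually_lt_nhds hu0)).exists_forall_of_atBot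
    exact ⟨M, fun m hm => not_lt.1 fun hmM => (hM m hmM.le).not_ge hm⟩
  refine ⟨fun h => ?_, fun h => csInf_le hbdd h⟩
  refine ge_of_tendsto (((cdf μ).right_continuous c).mono Ioi_subset_Ici_self)
    (eventually_nhdsWithin_of_forall fun m (hm : c < m) => ?_)
  obtain ⟨s, hs, hsm⟩ := exists_lt_of_csInf_lt hne (h.trans_lt hm)
  exact hs.trans (monotone_cdf μ hsm.le)

theorem le_leftQuantile (hu0 : 0 < u) (hu1 : u < 1) (h : μ.real (Iio c) < u) :
    c ≤ leftQuantile μ id u := by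
  by_contra! hlt
  have hq : u ≤ cdf μ (leftQuantile μ id u) := (leftQuantile_le_iff hu0 hu1).1 le_rfl
  rw [cdf_eq_real] at hq
  linarith [measureReal_mono (μ := μ) (Iic_subset_Iio.2 hlt)]

theorem monotoneOn_leftQuantile : MonotoneOn (leftQuantile μ id) (Ioo 0 1) :=
  fun _ hu _ hv huv => (leftQuantile_le_iff hu.1 hu.2).2
    (huv.trans ((leftQuantile_le_iff hv.1 hv.2).1 le_rfl))

theorem aemeasurable_leftQuantile :
    AEMeasurable (leftQuantile μ id) (volume.restrict (Ioo 0 1)) :=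
  aemeasurable_restrict_of_monotoneOn measurableSet_Ioo monotoneOn_leftQuantile

theorem map_leftQuantile : (volume.restrict (Ioo 0 1)).map (leftQuantile μ id) = μ := by
  refine (Measure.ext_of_Iic μ _ fun c => ?_).symm
  rw [Measure.map_apply_of_aemeasurable aemeasurable_leftQuantile measurableSet_Iic,
    Measure.restrict_apply' measurableSet_Ioo]
  calc μ (Iic c) = volume (Ioc 0 (cdf μ c)) := by rw [Real.volume_Ioc, sub_zero, ofReal_cdf]
    _ = volume (Iic (cdf μ c) ∩ Ioc 0 1) := by
      rw [inter_comm, Ioc_inter_Iic, min_eq_right (cdf_le_one μ c)]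
    _ = volume (Iic (cdf μ c) ∩ Ioo 0 1) :=
      measure_congr ((ae_eq_refl _).inter Ioo_ae_eq_Ioc).symm
    _ = volume (leftQuantile μ id ⁻¹' Iic c ∩ Ioo 0 1) := by
      congr 1
      ext u
      simp only [mem_inter_iff, mem_Iic, mem_preimage, and_congr_left_iff]
      exact fun hu => (leftQuantile_le_iff hu.1 hu.2).symm

theorem integrableOn_leftQuantile (hμ : Integrable id μ) :
    IntegrableOn (leftQuantile μ id) (Ioo 0 1) := by
  rw [← map_leftQuantile (μ := μ)] at hμ
  exact hμ.comp_aemeasurable aemeasurable_leftQuantile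

theorem setIntegral_comp_leftQuantile {g : ℝ → ℝ} (hg : Measurable g) :
    ∫ u in Ioo 0 1, g (leftQuantile μ id u) = ∫ x, g x ∂μ := by
  conv_rhs => rw [← map_leftQuantile (μ := μ)]
  exact (integral_map aemeasurable_leftQuantile hg.aestronglyMeasurable).symm

end Quantile

section ExpectedShortfall

variable {μ : Measure ℝ} [IsProbabilityMeasure μ] {β : ℝ}

theorem integral_leftQuantile_add_slack (hμ : Integrable id μ) (hβ0 : 0 < β) (hβ1 : β < 1)
    (c : ℝ) :
    (∫ u in β..1, leftQuantile μ id u) + (∫ u in Ioc 0 β, max (leftQuantile μ id u - c) 0)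
      + ∫ u in Ioo β 1, max (c - leftQuantile μ id u) 0
      = (1 - β) * c + ∫ x, max (x - c) 0 ∂μ := by
  set q := leftQuantile μ id
  have hq : IntegrableOn q (Ioo 0 1) := integrableOn_leftQuantile hμ
  have hc : IntegrableOn (fun _ => c) (Ioo (0 : ℝ) 1) := integrableOn_const measure_Ioo_lt_top.ne
  have hpos : IntegrableOn (fun u => max (q u - c) 0) (Ioo 0 1) := (hq.sub hc).pos_part
  have hneg : IntegrableOn (fun u => max (c - q u) 0) (Ioo 0 1) := (hc.sub hq).pos_part
  have hsub : Ioo β 1 ⊆ Ioo 0 1 := Ioo_subset_Ioo_left hβ0.le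
  have hsplit : ∫ x, max (x - c) 0 ∂μ
      = (∫ u in Ioc 0 β, max (q u - c) 0) + ∫ u in Ioo β 1, max (q u - c) 0 := by
    rw [← setIntegral_comp_leftQuantile (by fun_prop), ← Ioc_union_Ioo_eq_Ioo hβ0.le hβ1]
    exact setIntegral_union (Ioc_disjoint_Ioi_same.mono_right Ioo_subset_Ioi_self)
      measurableSet_Ioo (hpos.mono_set (Ioc_subset_Ioo_right hβ1)) (hpos.mono_set hsub)
  have hdecomp : ∫ u in Ioo β 1, q u
      = ∫ u in Ioo β 1, (c + max (q u - c) 0 - max (c - q u) 0) := by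
    congr 1
    ext u
    rw [← neg_sub (q u) c, add_sub_assoc, max_zero_sub_eq_self, add_sub_cancel]
  have hcpos : IntegrableOn (fun u => c + max (q u - c) 0) (Ioo β 1) :=
    (hc.add hpos).mono_set hsub
  rw [intervalIntegral.integral_of_le hβ1.le, integral_Ioc_eq_integral_Ioo, hdecomp,
    integral_sub hcpos (hneg.mono_set hsub),
    integral_add (hc.mono_set hsub) (hpos.mono_set hsub), setIntegral_const,
    Real.volume_real_Ioo_of_le hβ1.le, hsplit, smul_eq_mul]
  ring

theorem integral_leftQuantile_le (hμ : Integrable id μ) (hβ0 : 0 < β) (hβ1 : β < 1)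
    (c : ℝ) :
    ∫ u in β..1, leftQuantile μ id u ≤ (1 - β) * c + ∫ x, max (x - c) 0 ∂μ := by
  have h₁ : 0 ≤ ∫ u in Ioc 0 β, max (leftQuantile μ id u - c) 0 :=
    setIntegral_nonneg measurableSet_Ioc fun _ _ => le_max_right _ _
  have h₂ : 0 ≤ ∫ u in Ioo β 1, max (c - leftQuantile μ id u) 0 :=
    setIntegral_nonneg measurableSet_Ioo fun _ _ => le_max_right _ _
  linarith [integral_leftQuantile_add_slack hμ hβ0 hβ1 c]

theorem integral_leftQuantile_eq {c : ℝ} (hμ : Integrable id μ) (hβ0 : 0 < β) (hβ1 : β < 1)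
    (hlow : μ.real (Iio c) ≤ β) (hhigh : β ≤ cdf μ c) :
    ∫ u in β..1, leftQuantile μ id u = (1 - β) * c + ∫ x, max (x - c) 0 ∂μ := by
  have h₁ : ∫ u in Ioc 0 β, max (leftQuantile μ id u - c) 0 = 0 :=
    setIntegral_eq_zero_of_forall_eq_zero fun u hu => max_eq_right <| sub_nonpos.2 <|
      (leftQuantile_le_iff hu.1 (hu.2.trans_lt hβ1)).2 (hu.2.trans hhigh)
  have h₂ : ∫ u in Ioo β 1, max (c - leftQuantile μ id u) 0 = 0 :=
    setIntegral_eq_zero_of_forall_eq_zero fun u hu => max_eq_right <| sub_nonpos.2 <|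
      le_leftQuantile (hβ0.trans hu.1) hu.2 (hlow.trans_lt hu.1)
  linarith [integral_leftQuantile_add_slack hμ hβ0 hβ1 c]

end ExpectedShortfall

theorem integral_max_zero_eq_zero_iff {Ω : Type*} [MeasurableSpace Ω] {μ : Measure Ω}
    {f : Ω → ℝ} (hf : Integrable f μ) :
    ∫ x, max (f x) 0 ∂μ = 0 ↔ μ {x | 0 < f x} = 0 := by
  rw [integral_eq_zero_iff_of_nonneg (f := fun x => max (f x) 0) (fun x => le_max_right _ _)
    hf.pos_part, EventuallyEq, ae_iff]
  simp only [Pi.zero_apply, max_eq_right_iff, not_le]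

/-- The expected-shortfall level paired with the weight `γ` in the representation. -/
noncomputable def esLevel (α γ : ℝ) : ℝ := ((1 + γ) * α - 1) / ((2 * α - 1) * γ)

section Level

variable {α γ : ℝ}

theorem one_sub_esLevel (hα : 1 / 2 < α) (hγ : 0 < γ) :
    1 - esLevel α γ = (1 - γ) * (1 - α) / ((2 * α - 1) * γ) := by
  have : (2 * α - 1) * γ ≠ 0 := by nlinarith
  unfold esLevel
  rw [eq_div_iff this, sub_mul, div_mul_cancel₀ _ this]
  ring

theorem esLevel_mem_Ioo (hα : 1 / 2 < α) (hα1 : α < 1) (hγ : (1 - α) / α < γ)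
    (hγ1 : γ < 1) : esLevel α γ ∈ Ioo 0 1 := by
  have hγ0 : 0 < γ := lt_trans (div_pos (by linarith) (by linarith)) hγ
  have hnum : 0 < (1 + γ) * α - 1 := by
    have := (div_lt_iff₀ (by linarith : (0 : ℝ) < α)).1 hγ
    nlinarith
  refine ⟨div_pos hnum (mul_pos (by linarith) hγ0), ?_⟩
  have : 0 < 1 - esLevel α γ := by
    rw [one_sub_esLevel hα hγ0]
    exact div_pos (mul_pos (by linarith) (by linarith)) (mul_pos (by linarith) hγ0)
  linarith

theorem exists_esLevel_eq (hα : 1 / 2 < α) (hα1 : α < 1) {β : ℝ} (hβ : β ∈ Ioo 0 1) :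
    ∃ γ, (1 - α) / α < γ ∧ γ < 1 ∧ esLevel α γ = β := by
  obtain ⟨hβ0, hβ1⟩ := hβ
  have hden : 0 < (1 - β) * (2 * α - 1) + (1 - α) := by nlinarith
  refine ⟨(1 - α) / ((1 - β) * (2 * α - 1) + (1 - α)), ?_, ?_, ?_⟩
  · exact div_lt_div_of_pos_left (by linarith) hden (by nlinarith)
  · rw [div_lt_one hden]
    nlinarith
  · have hγ0 : 0 < (1 - α) / ((1 - β) * (2 * α - 1) + (1 - α)) := div_pos (by linarith) hden
    unfold esLevel
    rw [div_eq_iff (mul_pos (by linarith) hγ0).ne']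
    linear_combination div_mul_cancel₀ (1 - α) hden.ne'

end Level

section Expectile

variable {μ : Measure ℝ} [IsProbabilityMeasure μ] {α γ e : ℝ}

theorem IsExpectile.measure_Ioi_eq_zero_iff (hμ : Integrable id μ) (hα0 : 0 < α)
    (hα1 : α < 1) (he : IsExpectile μ id α e) : μ (Ioi e) = 0 ↔ μ (Iio e) = 0 := by
  have hpos : ∫ x, max (x - e) 0 ∂μ = 0 ↔ μ (Ioi e) = 0 := by
    simpa only [sub_pos, Ioi_def] using
      integral_max_zero_eq_zero_iff (f := fun x => x - e) (hμ.sub (integrable_const e))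
  have hneg : ∫ x, max (e - x) 0 ∂μ = 0 ↔ μ (Iio e) = 0 := by
    simpa only [sub_pos, Iio_def] using
      integral_max_zero_eq_zero_iff (f := fun x => e - x) ((integrable_const e).sub hμ)
  rw [← hpos, ← hneg]
  unfold IsExpectile at he
  simp only [id] at he
  constructor <;> intro h <;> rw [h, mul_zero] at he
  · exact (mul_eq_zero.1 he.symm).resolve_left (by linarith)
  · exact (mul_eq_zero.1 he).resolve_left hα0.ne'

theorem IsExpectile.exists_mem_Ioo_between_cdf (hμ : Integrable id μ) (hα0 : 0 < α)
    (hα1 : α < 1) (he : IsExpectile μ id α e) :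
    ∃ β ∈ Ioo 0 1, μ.real (Iio e) ≤ β ∧ β ≤ cdf μ e := by
  have hnull := he.measure_Ioi_eq_zero_iff hμ hα0 hα1
  have hIic : μ (Iic e) ≠ 0 := fun h => by
    have hIoi := hnull.2 (measure_mono_null Iio_subset_Iic_self h)
    simpa [Iic_union_Ioi] using measure_union_null h hIoi
  have hIci : μ (Ici e) ≠ 0 := fun h => by
    have hIio := hnull.1 (measure_mono_null Ioi_subset_Ici_self h)
    simpa [Iio_union_Ici] using measure_union_null hIio h
  have ha : μ.real (Iio e) < 1 := by
    have hcompl := probReal_compl_eq_one_sub (μ := μ) (measurableSet_Iio (a := e))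
    rw [compl_Iio] at hcompl
    have hpos : 0 < μ.real (Ici e) := ENNReal.toReal_pos hIci (measure_ne_top μ _)
    linarith
  have hb : 0 < cdf μ e := by
    rw [cdf_eq_real]
    exact ENNReal.toReal_pos hIic (measure_ne_top μ _)
  have hab : μ.real (Iio e) ≤ cdf μ e :=
    cdf_eq_real μ e ▸ measureReal_mono Iio_subset_Iic_self
  exact ⟨max (μ.real (Iio e)) (min (cdf μ e) (1 / 2)),
    ⟨lt_max_of_lt_right (lt_min hb (by norm_num)),
      max_lt ha ((min_le_right _ _).trans_lt (by norm_num))⟩,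
    le_max_left _ _, max_le hab (min_le_left _ _)⟩

theorem IsExpectile.weighted_ES_add_mean_eq (hμ : Integrable id μ) (hα : 1 / 2 < α)
    (hα1 : α < 1) (hγ0 : 0 < γ) (hγ1 : γ < 1) (he : IsExpectile μ id α e) :
    (1 - γ) * ES μ id (esLevel α γ) + γ * ∫ x, x ∂μ
      = e - (2 * α - 1) * γ / (1 - α) * ((1 - esLevel α γ) * e + ∫ x, max (x - e) 0 ∂μ
          - ∫ u in esLevel α γ..1, leftQuantile μ id u) := by
  have hmean : ∫ x, x ∂μ = e + ∫ x, max (x - e) 0 ∂μ - ∫ x, max (e - x) 0 ∂μ := by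
    have hpos : Integrable (fun x => max (x - e) 0) μ := (hμ.sub (integrable_const e)).pos_part
    have hneg : Integrable (fun x => max (e - x) 0) μ := ((integrable_const e).sub hμ).pos_part
    calc ∫ x, x ∂μ = e + ∫ x, (x - e) ∂μ := by
          rw [integral_sub (f := fun x => x) hμ (integrable_const e), integral_const,
            probReal_univ, one_smul]
          ring
      _ = e + ∫ x, (max (x - e) 0 - max (e - x) 0) ∂μ := by
          simp_rw [← neg_sub _ e, max_zero_sub_eq_self]
      _ = _ := by
          rw [integral_sub hpos hneg, add_sub_assoc]
  unfold ES
  unfold IsExpectile at he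
  simp only [id] at he
  have h2α : 2 * α - 1 ≠ 0 := by linarith
  have h1α : 1 - α ≠ 0 := by linarith
  have h1γ : 1 - γ ≠ 0 := by linarith
  rw [one_sub_esLevel hα hγ0, hmean, inv_div]
  field_simp
  linear_combination γ * he

theorem IsExpectile.isGreatest_weighted_ES_add_mean (hμ : Integrable id μ) (hα : 1 / 2 < α)
    (hα1 : α < 1) (he : IsExpectile μ id α e) :
    IsGreatest {r | ∃ γ, (1 - α) / α < γ ∧ γ < 1 ∧
      r = (1 - γ) * ES μ id (esLevel α γ) + γ * ∫ x, x ∂μ} e := by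
  have hα0 : 0 < α := by linarith
  have hγ0 : ∀ γ, (1 - α) / α < γ → 0 < γ := fun γ hγ =>
    (div_pos (by linarith) hα0).trans hγ
  refine ⟨?_, ?_⟩
  · obtain ⟨β, hβ, hlow, hhigh⟩ := he.exists_mem_Ioo_between_cdf hμ hα0 hα1
    obtain ⟨γ, hγ, hγ1, rfl⟩ := exists_esLevel_eq hα hα1 hβ
    refine ⟨γ, hγ, hγ1, ?_⟩
    rw [he.weighted_ES_add_mean_eq hμ hα hα1 (hγ0 γ hγ) hγ1,
      integral_leftQuantile_eq hμ hβ.1 hβ.2 hlow hhigh]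
    ring
  · rintro r ⟨γ, hγ, hγ1, rfl⟩
    obtain ⟨hβ0, hβ1⟩ := esLevel_mem_Ioo hα hα1 hγ hγ1
    rw [he.weighted_ES_add_mean_eq hμ hα hα1 (hγ0 γ hγ) hγ1, sub_le_self_iff]
    exact mul_nonneg (div_nonneg (mul_nonneg (by linarith) (hγ0 γ hγ).le) (by linarith))
      (sub_nonneg.2 (integral_leftQuantile_le hμ hβ0 hβ1 e))

end Expectile

section Law

variable {Ω : Type*} [MeasurableSpace Ω] {P : Measure Ω} {L : Ω → ℝ}

theorem leftQuantile_map (hL : AEMeasurable L P) :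
    leftQuantile (P.map L) id = leftQuantile P L := by
  ext u
  unfold leftQuantile
  congr! 4 with m
  exact congrArg ENNReal.toReal (Measure.map_apply_of_aemeasurable hL measurableSet_Iic)

theorem ES_map (hL : AEMeasurable L P) (β : ℝ) : ES (P.map L) id β = ES P L β := by
  unfold ES
  rw [leftQuantile_map hL]

theorem isExpectile_map (hL : AEMeasurable L P) {α e : ℝ} :
    IsExpectile (P.map L) id α e ↔ IsExpectile P L α e := by
  unfold IsExpectile
  rw [integral_map hL (by fun_prop), integral_map hL (by fun_prop)]
  rfl

end Law

/-- the expectile representation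
`e_α(L) = sup { (1-γ)·ES_{((1+γ)α-1)/((2α-1)γ)}(L) + γ·E[L] : (1-α)/α < γ < 1 }`,
and for non-constant `L` the supremum is attained. -/
theorem expectile_sup_representation {Ω : Type*} [MeasurableSpace Ω] (P : Measure Ω)
    [IsProbabilityMeasure P] (L : Ω → ℝ) (hL : Integrable L P)
    (α : ℝ) (hα : 1 / 2 < α) (hα1 : α < 1) (e : ℝ) (he : IsExpectile P L α e) :
    e = sSup {r : ℝ | ∃ γ : ℝ, (1 - α) / α < γ ∧ γ < 1 ∧
        r = (1 - γ) * ES P L (((1 + γ) * α - 1) / ((2 * α - 1) * γ)) + γ * ∫ ω, L ω ∂P} ∧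
      ((¬ ∃ c : ℝ, ∀ᵐ ω ∂P, L ω = c) →
        ∃ γ : ℝ, (1 - α) / α < γ ∧ γ < 1 ∧
          e = (1 - γ) * ES P L (((1 + γ) * α - 1) / ((2 * α - 1) * γ)) + γ * ∫ ω, L ω ∂P) := by
  have hLm := hL.aemeasurable
  have := Measure.isProbabilityMeasure_map (μ := P) hLm
  have hμ : Integrable id (P.map L) := (integrable_map_measure aestronglyMeasurable_id hLm).2 hL
  have hG := ((isExpectile_map hLm).2 he).isGreatest_weighted_ES_add_mean hμ hα hα1
  have hmean : ∫ x, x ∂(P.map L) = ∫ ω, L ω ∂P := integral_map hLm aestronglyMeasurable_id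
  simp only [ES_map hLm, hmean] at hG
  exact ⟨hG.csSup_eq.symm, fun _ => hG.1⟩
end

section
/- Let L be an integrable real random variable on a probability space (Ω,𝓕,P) and let 1/2 ≤ α < 1. Then e_α(L) = sup{ E[Z·L] : Z is a random variable with E[Z] = 1 and γ ≤ Z ≤ γα/(1−α) almost surely for some γ ∈ [(1−α)/α, 1] }, and the supremum is attained at Z* = (α·1_{L > e_α(L)} + (1−α)·1_{L ≤ e_α(L)}) / (α + (1−2α)·P[L ≤ e_α(L)]). -/
/-!
For an admissible density `Z` (with `γ ≤ Z ≤ γα/(1-α)`) one has pointwise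
`Z (L - e) ≤ γα/(1-α) (L - e)⁺ - γ (L - e)⁻`, and the expectation of the right-hand side is
`γ/(1-α)` times `α E[(L-e)⁺] - (1-α) E[(L-e)⁻] = 0`; hence `E[Z L] ≤ e E[Z] = e`.
Equality holds for the density proportional to the weights `α` on `{L > e}` and `1 - α` on
`{L ≤ e}`, since these weights turn the defining equation of the expectile into `E[Z (L - e)] = 0`.
-/

open MeasureTheory Filter Topology Real Set
open scoped ENNReal

lemma mul_sub_le_of_mem_Icc {z a b l e : ℝ} (hz : a ≤ z ∧ z ≤ b) :
    z * (l - e) ≤ b * max (l - e) 0 - a * max (e - l) 0 := by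
  rcases le_total e l with h | h
  · rw [max_eq_left (sub_nonneg.2 h), max_eq_right (sub_nonpos.2 h)]
    nlinarith
  · rw [max_eq_right (sub_nonpos.2 h), max_eq_left (sub_nonneg.2 h)]
    nlinarith

noncomputable def expectileWeight (α e x : ℝ) : ℝ := if e < x then α else 1 - α

lemma expectileWeight_mul_sub (α e x : ℝ) :
    expectileWeight α e x * (x - e) = α * max (x - e) 0 - (1 - α) * max (e - x) 0 := by
  unfold expectileWeight
  split_ifs with h
  · rw [max_eq_left (by linarith), max_eq_right (by linarith)]
    ring
  · rw [max_eq_right (by linarith), max_eq_left (by linarith)]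
    ring

lemma expectileWeight_eq_sub_indicator (α e x : ℝ) :
    expectileWeight α e x = α - (2 * α - 1) * (Iic e).indicator 1 x := by
  by_cases h : x ≤ e
  · simp only [expectileWeight, if_neg (not_lt.2 h), indicator_of_mem (mem_Iic.2 h),
      Pi.one_apply]
    ring
  · simp [expectileWeight, not_le.1 h, h]

lemma measurable_expectileWeight (α e : ℝ) : Measurable (expectileWeight α e) :=
  Measurable.ite measurableSet_Ioi measurable_const measurable_const

lemma expectileWeight_mem_Icc (hα : 1 / 2 ≤ α) (x : ℝ) :
    expectileWeight α e x ∈ Icc (1 - α) α := by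
  unfold expectileWeight
  split_ifs <;> constructor <;> linarith

section

variable {Ω : Type*} [MeasurableSpace Ω] {P : Measure Ω} {L Z : Ω → ℝ} {α e : ℝ}

lemma integral_mul_sub_const [IsFiniteMeasure P] (hL : Integrable L P)
    (hZ : AEStronglyMeasurable Z P) {a b : ℝ} (hZb : ∀ᵐ ω ∂P, a ≤ Z ω ∧ Z ω ≤ b) (e : ℝ) :
    ∫ ω, Z ω * (L ω - e) ∂P = ∫ ω, Z ω * L ω ∂P - e * ∫ ω, Z ω ∂P := by
  have hZC : ∀ᵐ ω ∂P, ‖Z ω‖ ≤ max |a| |b| :=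
    hZb.mono fun ω h => abs_le_max_abs_abs h.1 h.2
  simp_rw [mul_sub]
  rw [integral_sub (hL.bdd_mul hZ hZC) ((Integrable.of_bound hZ _ hZC).mul_const e),
    integral_mul_const, mul_comm]

theorem IsExpectile.integral_mul_sub_nonpos [IsFiniteMeasure P] (he : IsExpectile P L α e)
    (hL : Integrable L P) (hα1 : α ≠ 1) {γ : ℝ}
    (hZ : ∀ᵐ ω ∂P, γ ≤ Z ω ∧ Z ω ≤ γ * α / (1 - α)) :
    ∫ ω, Z ω * (L ω - e) ∂P ≤ 0 := by
  by_cases hint : Integrable (fun ω => Z ω * (L ω - e)) P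
  swap
  · rw [integral_undef hint]
  have hpos : Integrable (fun ω => max (L ω - e) 0) P := (hL.sub (integrable_const e)).pos_part
  have hneg : Integrable (fun ω => max (e - L ω) 0) P := ((integrable_const e).sub hL).pos_part
  have h1α : 1 - α ≠ 0 := sub_ne_zero.2 (Ne.symm hα1)
  calc ∫ ω, Z ω * (L ω - e) ∂P
      ≤ ∫ ω, (γ * α / (1 - α) * max (L ω - e) 0 - γ * max (e - L ω) 0) ∂P :=
        integral_mono_ae hint ((hpos.const_mul _).sub (hneg.const_mul _))
          (hZ.mono fun ω hω => mul_sub_le_of_mem_Icc hω)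
    _ = γ / (1 - α) * (α * ∫ ω, max (L ω - e) 0 ∂P - (1 - α) * ∫ ω, max (e - L ω) 0 ∂P) := by
        rw [integral_sub (hpos.const_mul _) (hneg.const_mul _), integral_const_mul,
          integral_const_mul]
        field_simp
    _ = 0 := by rw [he, sub_self, mul_zero]

def expectileDualSet (P : Measure Ω) (L : Ω → ℝ) (α : ℝ) : Set ℝ :=
  {r : ℝ | ∃ Z : Ω → ℝ, ∃ γ : ℝ, (1 - α) / α ≤ γ ∧ γ ≤ 1 ∧ Measurable Z ∧
    (∫ ω, Z ω ∂P) = 1 ∧ (∀ᵐ ω ∂P, γ ≤ Z ω ∧ Z ω ≤ γ * α / (1 - α)) ∧ r = ∫ ω, Z ω * L ω ∂P}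

theorem IsExpectile.le_of_mem_expectileDualSet [IsFiniteMeasure P] (he : IsExpectile P L α e)
    (hL : Integrable L P) (hα1 : α ≠ 1) {r : ℝ} (hr : r ∈ expectileDualSet P L α) :
    r ≤ e := by
  obtain ⟨Z, γ, -, -, hZ, hZ1, hZb, rfl⟩ := hr
  have key := he.integral_mul_sub_nonpos hL hα1 hZb
  rw [integral_mul_sub_const hL hZ.aestronglyMeasurable hZb, hZ1, mul_one] at key
  linarith

lemma mem_expectileDualSet_of_aemeasurable {γ : ℝ} (hZ : AEMeasurable Z P) (hγ : (1 - α) / α ≤ γ)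
    (hγ1 : γ ≤ 1) (hZ1 : ∫ ω, Z ω ∂P = 1) (hZb : ∀ᵐ ω ∂P, γ ≤ Z ω ∧ Z ω ≤ γ * α / (1 - α)) :
    ∫ ω, Z ω * L ω ∂P ∈ expectileDualSet P L α := by
  have hZmk := hZ.ae_eq_mk
  refine ⟨hZ.mk Z, γ, hγ, hγ1, hZ.measurable_mk, ?_, ?_, ?_⟩
  · rwa [← integral_congr_ae hZmk]
  · filter_upwards [hZb, hZmk] with ω hω hω'
    rwa [← hω']
  · exact integral_congr_ae (hZmk.mul EventuallyEq.rfl)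

noncomputable def expectileNormalizer (P : Measure Ω) (L : Ω → ℝ) (α e : ℝ) : ℝ :=
  α + (1 - 2 * α) * (P {ω | L ω ≤ e}).toReal

noncomputable def expectileDensity (P : Measure Ω) (L : Ω → ℝ) (α e : ℝ) : Ω → ℝ :=
  fun ω => expectileWeight α e (L ω) / expectileNormalizer P L α e

lemma IsExpectile.integral_expectileWeight_mul_sub [IsFiniteMeasure P] (he : IsExpectile P L α e)
    (hL : Integrable L P) : ∫ ω, expectileWeight α e (L ω) * (L ω - e) ∂P = 0 := by
  have hpos : Integrable (fun ω => max (L ω - e) 0) P := (hL.sub (integrable_const e)).pos_part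
  have hneg : Integrable (fun ω => max (e - L ω) 0) P := ((integrable_const e).sub hL).pos_part
  simp_rw [expectileWeight_mul_sub]
  rw [integral_sub (hpos.const_mul _) (hneg.const_mul _), integral_const_mul, integral_const_mul,
    he, sub_self]

lemma aemeasurable_expectileDensity (hL : AEMeasurable L P) :
    AEMeasurable (expectileDensity P L α e) P :=
  ((measurable_expectileWeight α e).comp_aemeasurable hL).div_const _

variable [IsProbabilityMeasure P]

lemma expectileNormalizer_mem_Icc (hα : 1 / 2 ≤ α) :
    expectileNormalizer P L α e ∈ Icc (1 - α) α := by
  have hp0 : 0 ≤ P.real {ω | L ω ≤ e} := measureReal_nonneg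
  have hp1 : P.real {ω | L ω ≤ e} ≤ 1 := measureReal_le_one
  rw [expectileNormalizer, ← measureReal_def]
  constructor <;> nlinarith

lemma integral_expectileWeight (hL : AEMeasurable L P) :
    ∫ ω, expectileWeight α e (L ω) ∂P = expectileNormalizer P L α e := by
  have hs : NullMeasurableSet {ω | L ω ≤ e} P := hL.nullMeasurable measurableSet_Iic
  have hind (ω : Ω) :
      (Iic e).indicator (1 : ℝ → ℝ) (L ω) = {ω | L ω ≤ e}.indicator (fun _ => 1) ω := rfl
  simp_rw [expectileWeight_eq_sub_indicator, hind]
  rw [integral_sub (integrable_const α) (((integrable_const 1).indicator₀ hs).const_mul _),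
    integral_const_mul, integral_indicator₀ hs, setIntegral_const, integral_const]
  simp only [expectileNormalizer, measureReal_def, measure_univ, ENNReal.toReal_one, smul_eq_mul]
  ring

lemma integral_expectileDensity (hL : AEMeasurable L P) (hα : 1 / 2 ≤ α) (hα1 : α < 1) :
    ∫ ω, expectileDensity P L α e ω ∂P = 1 := by
  have hD := expectileNormalizer_mem_Icc (P := P) (L := L) (e := e) hα
  simp only [expectileDensity]
  rw [integral_div, integral_expectileWeight hL, div_self (by linarith [hD.1])]

lemma expectileDensity_bounds (hα : 1 / 2 ≤ α) (hα1 : α < 1) :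
    ∃ γ, (1 - α) / α ≤ γ ∧ γ ≤ 1 ∧
      ∀ ω, γ ≤ expectileDensity P L α e ω ∧ expectileDensity P L α e ω ≤ γ * α / (1 - α) := by
  obtain ⟨hD1, hDα⟩ := expectileNormalizer_mem_Icc (P := P) (L := L) (e := e) hα
  set D := expectileNormalizer P L α e
  have hD : 0 < D := by linarith
  have hγα : (1 - α) / D * α / (1 - α) = α / D := by
    field_simp [show 1 - α ≠ 0 by linarith]
  refine ⟨(1 - α) / D, div_le_div_of_nonneg_left (by linarith) hD hDα, (div_le_one hD).2 hD1,
    fun ω => ?_⟩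
  obtain ⟨hw1, hwα⟩ := expectileWeight_mem_Icc (e := e) hα (L ω)
  rw [hγα]
  exact ⟨div_le_div_of_nonneg_right hw1 hD.le, div_le_div_of_nonneg_right hwα hD.le⟩

lemma IsExpectile.integral_expectileDensity_mul (he : IsExpectile P L α e) (hL : Integrable L P)
    (hα : 1 / 2 ≤ α) (hα1 : α < 1) : ∫ ω, expectileDensity P L α e ω * L ω ∂P = e := by
  obtain ⟨γ, -, -, hZb⟩ := expectileDensity_bounds (P := P) (L := L) (e := e) hα hα1
  have hZL : ∫ ω, expectileDensity P L α e ω * (L ω - e) ∂P = 0 := by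
    simp only [expectileDensity, div_mul_eq_mul_div]
    rw [integral_div, he.integral_expectileWeight_mul_sub hL, zero_div]
  have hsplit := integral_mul_sub_const hL
    (aemeasurable_expectileDensity hL.aemeasurable).aestronglyMeasurable (ae_of_all _ hZb) e
  rw [hZL, integral_expectileDensity hL.aemeasurable hα hα1] at hsplit
  linarith

end

/-- dual representation of the expectile,
`e_α(L) = sup { E[Z·L] : E[Z] = 1, γ ≤ Z ≤ γα/(1-α) a.s. for some γ ∈ [(1-α)/α, 1] }`,
with the supremum attained at
`Z* = (α·1_{L>e} + (1-α)·1_{L≤e})/(α + (1-2α)P[L ≤ e])`. -/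
theorem expectile_dual_representation {Ω : Type*} [MeasurableSpace Ω] (P : Measure Ω)
    [IsProbabilityMeasure P] (L : Ω → ℝ) (hL : Integrable L P)
    (α : ℝ) (hα : 1 / 2 ≤ α) (hα1 : α < 1) (e : ℝ) (he : IsExpectile P L α e)
    (Zstar : Ω → ℝ)
    (hZstar : Zstar = fun ω =>
      (if e < L ω then α else 1 - α) / (α + (1 - 2 * α) * (P {ω' | L ω' ≤ e}).toReal)) :
    e = sSup {r : ℝ | ∃ Z : Ω → ℝ, ∃ γ : ℝ, (1 - α) / α ≤ γ ∧ γ ≤ 1 ∧ Measurable Z ∧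
        (∫ ω, Z ω ∂P) = 1 ∧ (∀ᵐ ω ∂P, γ ≤ Z ω ∧ Z ω ≤ γ * α / (1 - α)) ∧
        r = ∫ ω, Z ω * L ω ∂P} ∧
      (∫ ω, Zstar ω ∂P) = 1 ∧
      (∃ γ : ℝ, (1 - α) / α ≤ γ ∧ γ ≤ 1 ∧
        ∀ᵐ ω ∂P, γ ≤ Zstar ω ∧ Zstar ω ≤ γ * α / (1 - α)) ∧
      (∫ ω, Zstar ω * L ω ∂P) = e := by
  obtain rfl : Zstar = expectileDensity P L α e := hZstar
  obtain ⟨γ, hγ, hγ1, hZb⟩ := expectileDensity_bounds (P := P) (L := L) (e := e) hα hα1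
  have hZ1 := integral_expectileDensity (e := e) hL.aemeasurable hα hα1
  have hZL := he.integral_expectileDensity_mul hL hα hα1
  have hmem : e ∈ expectileDualSet P L α := hZL ▸ mem_expectileDualSet_of_aemeasurable
    (aemeasurable_expectileDensity hL.aemeasurable) hγ hγ1 hZ1 (ae_of_all _ hZb)
  have hgreatest : IsGreatest (expectileDualSet P L α) e :=
    ⟨hmem, fun r hr => he.le_of_mem_expectileDualSet hL hα1.ne hr⟩
  exact ⟨hgreatest.csSup_eq.symm, hZ1, ⟨γ, hγ, hγ1, ae_of_all _ hZb⟩, hZL⟩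
end

section
/- Let L be an integrable real random variable on a probability space (Ω,𝓕,P) with E[L] = 0, and let 1/2 ≤ α < 1. Then for every 0 < β < 1 it holds that (1 − (1−α)/(α + (1−2α)β))·ES_β(L) ≤ e_α(L) ≤ (1 − (1−α)/α)·ES_α(L) ≤ ES_{(2α−1)/α}(L). -/
open MeasureTheory Filter Topology Real Set
open scoped ENNReal

/-!
Let `q` be the quantile function of `L` and `F` its distribution function. Since `q` is
monotone, `G t = ∫ u in t..1, (q u - e)` is concave in `t`, with `G 0 = -e` (as `E[L] = 0`),
`G 1 = 0` and maximum `G (F e) = E[(L - e)⁺]`. With `E[L] = 0` the expectile equation reads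
`(2α - 1) E[(L - e)⁺] = (1 - α) e`. The lower bound is then `G β ≤ G (F e)`, the middle one is
concavity of `G` at `α` along the chord from `F e` to `0` or to `1`, and the last one is the
decrease of the slopes `t⁻¹ ∫ u in t..1, q u` of the concave function `t ↦ ∫ u in t..1, q u`,
which vanishes at `t = 0`.
-/

open intervalIntegral ProbabilityTheory

theorem IntervalIntegrable.mono_unitInterval {f : ℝ → ℝ}
    (hfi : IntervalIntegrable f volume 0 1) {a b : ℝ} (ha : a ∈ unitInterval)
    (hb : b ∈ unitInterval) : IntervalIntegrable f volume a b :=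
  hfi.mono_set (uIcc_subset_uIcc (by rwa [uIcc_of_le zero_le_one])
    (by rwa [uIcc_of_le zero_le_one]))

section MonotoneOn

variable {f : ℝ → ℝ} {a b c m s t α : ℝ}

/-- The chord inequality for the concave function `t ↦ ∫ u in t..b, f u`. -/
theorem MonotoneOn.sub_mul_intervalIntegral_le (hf : MonotoneOn f (Ioo a b))
    (hfi : IntervalIntegrable f volume a b) (ham : a ≤ m) (hmb : m ≤ b) :
    (b - m) * ∫ u in a..m, f u ≤ (m - a) * ∫ u in m..b, f u := by
  rcases ham.eq_or_lt with rfl | ham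
  · simp
  rcases hmb.eq_or_lt with rfl | hmb
  · simp
  have hm : m ∈ Ioo a b := ⟨ham, hmb⟩
  have hleft : ∫ u in a..m, f u ≤ (m - a) * f m := by
    simpa using integral_mono_on_of_le_Ioo ham.le
      (hfi.mono_set (uIcc_subset_uIcc left_mem_uIcc (mem_uIcc_of_le ham.le hmb.le)))
      intervalIntegrable_const fun x hx => hf ⟨hx.1, hx.2.trans hmb⟩ hm hx.2.le
  have hright : (b - m) * f m ≤ ∫ u in m..b, f u := by
    simpa using integral_mono_on_of_le_Ioo hmb.le intervalIntegrable_const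
      (hfi.mono_set (uIcc_subset_uIcc (mem_uIcc_of_le ham.le hmb.le) right_mem_uIcc))
      fun x hx => hf hm ⟨ham.trans hx.1, hx.2⟩ hx.1.le
  calc (b - m) * ∫ u in a..m, f u ≤ (b - m) * ((m - a) * f m) := by gcongr
    _ = (m - a) * ((b - m) * f m) := by ring
    _ ≤ (m - a) * ∫ u in m..b, f u := by gcongr

theorem MonotoneOn.mul_intervalIntegral_le_of_intervalIntegral_eq_zero
    (hf : MonotoneOn f (Ioo 0 1)) (hfi : IntervalIntegrable f volume 0 1)
    (hf0 : ∫ u in 0..1, f u = 0) (hs : 0 ≤ s) (hst : s ≤ t) (ht : t ≤ 1) :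
    s * ∫ u in t..1, f u ≤ t * ∫ u in s..1, f u := by
  have hs' : s ∈ unitInterval := ⟨hs, hst.trans ht⟩
  have ht' : t ∈ unitInterval := ⟨hs.trans hst, ht⟩
  have hchord := (hf.mono (Ioo_subset_Ioo_right ht)).sub_mul_intervalIntegral_le
    (hfi.mono_unitInterval unitInterval.zero_mem ht') hs hst
  have h0s1 := integral_add_adjacent_intervals
    (hfi.mono_unitInterval unitInterval.zero_mem hs')
    (hfi.mono_unitInterval hs' unitInterval.one_mem)
  have hst1 := integral_add_adjacent_intervals
    (hfi.mono_unitInterval hs' ht') (hfi.mono_unitInterval ht' unitInterval.one_mem)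
  nlinarith

-- When `f` changes sign at `c`, `hbal` is the expectile equation `α ∫ f⁺ = (1 - α) ∫ f⁻`.
theorem MonotoneOn.one_sub_mul_le_intervalIntegral (hf : MonotoneOn f (Ioo 0 1))
    (hfi : IntervalIntegrable f volume 0 1) (hc : c ∈ unitInterval) (hα0 : 0 ≤ α)
    (hα1 : α < 1) (hpos : 0 ≤ ∫ u in c..1, f u)
    (hbal : (2 * α - 1) * (∫ u in c..1, f u) + (1 - α) * ∫ u in 0..1, f u = 0) :
    (1 - α) * ∫ u in c..1, f u ≤ ∫ u in α..1, f u := by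
  have hα : α ∈ unitInterval := ⟨hα0, hα1.le⟩
  rcases le_or_gt c α with hcα | hαc
  · have hchord := (hf.mono (Ioo_subset_Ioo_left hc.1)).sub_mul_intervalIntegral_le
      (hfi.mono_unitInterval hc unitInterval.one_mem) hcα hα1.le
    rw [← integral_add_adjacent_intervals (hfi.mono_unitInterval hc hα)
      (hfi.mono_unitInterval hα unitInterval.one_mem)] at hpos ⊢
    set G := ∫ u in α..1, f u
    have hG : 0 ≤ G := by nlinarith
    nlinarith [mul_nonneg hc.1 hG]
  · have hchord := (hf.mono (Ioo_subset_Ioo_right hc.2)).sub_mul_intervalIntegral_le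
      (hfi.mono_unitInterval unitInterval.zero_mem hc) hα0 hαc.le
    rw [← integral_add_adjacent_intervals (hfi.mono_unitInterval unitInterval.zero_mem hc)
        (hfi.mono_unitInterval hc unitInterval.one_mem),
      ← integral_add_adjacent_intervals (hfi.mono_unitInterval unitInterval.zero_mem hα)
        (hfi.mono_unitInterval hα hc)] at hbal
    rw [← integral_add_adjacent_intervals (hfi.mono_unitInterval hα hc)
      (hfi.mono_unitInterval hc unitInterval.one_mem)]
    set Z := ∫ u in 0..α, f u
    set Y := ∫ u in α..c, f u
    have hZY : Z + Y ≤ 0 := by nlinarith [mul_nonneg hα0 hpos, sub_pos.2 hα1]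
    have hscaled : c * ((1 - α) * (Z + Y) - Y) ≤ 0 := by
      nlinarith [mul_nonpos_of_nonneg_of_nonpos (mul_nonneg hα0 (sub_nonneg.2 hc.2)) hZY]
    have hY : (1 - α) * (Z + Y) ≤ Y := by nlinarith [hα0.trans_lt hαc]
    linarith

end MonotoneOn

section SignChange

variable {f : ℝ → ℝ} {c : ℝ}

theorem intervalIntegral_max_zero_eq_of_nonpos_iff (hfi : IntervalIntegrable f volume 0 1)
    (hc : c ∈ unitInterval) (hsign : ∀ u ∈ Ioo 0 1, f u ≤ 0 ↔ u ≤ c) :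
    ∫ u in 0..1, max (f u) 0 = ∫ u in c..1, f u := by
  have hfi' : IntervalIntegrable (fun u => max (f u) 0) volume 0 1 :=
    ⟨hfi.1.pos_part, hfi.2.pos_part⟩
  rw [← integral_add_adjacent_intervals (hfi'.mono_unitInterval unitInterval.zero_mem hc)
    (hfi'.mono_unitInterval hc unitInterval.one_mem)]
  have hleft : ∫ u in 0..c, max (f u) 0 = ∫ u in 0..c, (0 : ℝ) :=
    integral_congr_Ioo_of_le hc.1 fun u hu =>
      max_eq_right ((hsign u ⟨hu.1, hu.2.trans_le hc.2⟩).2 hu.2.le)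
  have hright : ∫ u in c..1, max (f u) 0 = ∫ u in c..1, f u :=
    integral_congr_Ioo_of_le hc.2 fun u hu =>
      max_eq_left (not_le.1 fun h => hu.1.not_ge ((hsign u ⟨hc.1.trans_lt hu.1, hu.2⟩).1 h)).le
  rw [hleft, hright, intervalIntegral.integral_zero, zero_add]

theorem intervalIntegral_le_of_nonpos_iff (hfi : IntervalIntegrable f volume 0 1)
    (hc : c ∈ unitInterval) (hsign : ∀ u ∈ Ioo 0 1, f u ≤ 0 ↔ u ≤ c) {t : ℝ}
    (ht : t ∈ unitInterval) :
    ∫ u in t..1, f u ≤ ∫ u in c..1, f u := by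
  have hfi' : IntervalIntegrable (fun u => max (f u) 0) volume 0 1 :=
    ⟨hfi.1.pos_part, hfi.2.pos_part⟩
  calc ∫ u in t..1, f u ≤ ∫ u in t..1, max (f u) 0 :=
        integral_mono_on ht.2 (hfi.mono_unitInterval ht unitInterval.one_mem)
          (hfi'.mono_unitInterval ht unitInterval.one_mem) fun u _ => le_max_left _ _
    _ ≤ ∫ u in 0..1, max (f u) 0 :=
        integral_mono_interval ht.1 ht.2 le_rfl (ae_of_all _ fun u => le_max_right _ _) hfi'
    _ = ∫ u in c..1, f u := intervalIntegral_max_zero_eq_of_nonpos_iff hfi hc hsign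

end SignChange

section LeftQuantile

variable {Ω : Type*} [MeasurableSpace Ω] {P : Measure Ω} [IsProbabilityMeasure P]
  {L : Ω → ℝ}

theorem leftQuantile_le_iff_s6 (hL : AEMeasurable L P) {u m : ℝ} (hu : u ∈ Ioo 0 1) :
    leftQuantile P L u ≤ m ↔ u ≤ cdf (P.map L) m := by
  set ν := P.map L
  have := Measure.isProbabilityMeasure_map hL
  have hset : {m : ℝ | u ≤ (P {ω | L ω ≤ m}).toReal} = {m | u ≤ cdf ν m} := by
    ext m
    rw [mem_ofPred_eq, mem_ofPred_eq, cdf_eq_real, measureReal_def,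
      Measure.map_apply_of_aemeasurable hL measurableSet_Iic]
    rfl
  have hne : {m | u ≤ cdf ν m}.Nonempty :=
    ((tendsto_cdf_atTop ν).eventually (eventually_ge_nhds hu.2)).exists
  have hbdd : BddBelow {m | u ≤ cdf ν m} := by
    obtain ⟨x, hx⟩ := ((tendsto_cdf_atBot ν).eventually (eventually_lt_nhds hu.1)).exists
    exact ⟨x, fun y hy => le_of_not_gt fun hyx => (hy.trans (monotone_cdf ν hyx.le)).not_gt hx⟩
  rw [leftQuantile, hset]
  refine ⟨fun hle => ?_, fun hm => csInf_le hbdd hm⟩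
  -- the infimum is attained, by right-continuity of the cdf
  have hinf : u ≤ cdf ν (sInf {m | u ≤ cdf ν m}) := by
    refine ge_of_tendsto (((cdf ν).right_continuous _).mono_left
      (nhdsWithin_mono _ Ioi_subset_Ici_self)) ?_
    filter_upwards [self_mem_nhdsWithin] with x hx
    obtain ⟨y, hy, hyx⟩ := exists_lt_of_csInf_lt hne hx
    exact hy.trans (monotone_cdf ν hyx.le)
  exact hinf.trans (monotone_cdf ν hle)

theorem monotoneOn_leftQuantile_s6 (hL : AEMeasurable L P) :
    MonotoneOn (leftQuantile P L) (Ioo 0 1) := fun _ hu _ hv huv =>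
  (leftQuantile_le_iff_s6 hL hu).2 (huv.trans ((leftQuantile_le_iff_s6 hL hv).1 le_rfl))

theorem aemeasurable_leftQuantile_s6 (hL : AEMeasurable L P) :
    AEMeasurable (leftQuantile P L) (volume.restrict (Ioc 0 1)) := by
  rw [Measure.restrict_congr_set Ioo_ae_eq_Ioc.symm]
  exact aemeasurable_restrict_of_monotoneOn measurableSet_Ioo (monotoneOn_leftQuantile_s6 hL)

theorem map_leftQuantile_s6 (hL : AEMeasurable L P) :
    (volume.restrict (Ioc 0 1)).map (leftQuantile P L) = P.map L := by
  have := Measure.isProbabilityMeasure_map hL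
  have : IsFiniteMeasure (volume.restrict (Ioc (0 : ℝ) 1)) := by
    rw [isFiniteMeasure_restrict]; exact measure_Ioc_lt_top.ne
  refine Measure.ext_of_Iic _ _ fun m => ?_
  rw [Measure.map_apply_of_aemeasurable (aemeasurable_leftQuantile_s6 hL) measurableSet_Iic,
    Measure.restrict_congr_set Ioo_ae_eq_Ioc.symm, Measure.restrict_apply' measurableSet_Ioo,
    ← ofReal_cdf]
  have hset : leftQuantile P L ⁻¹' Iic m ∩ Ioo 0 1 = Iic (cdf (P.map L) m) ∩ Ioo 0 1 := by
    ext u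
    simp only [mem_inter_iff, mem_preimage, mem_Iic, and_congr_left_iff]
    exact leftQuantile_le_iff_s6 hL
  rw [hset]
  apply le_antisymm
  · calc volume (Iic (cdf (P.map L) m) ∩ Ioo 0 1) ≤ volume (Ioc 0 (cdf (P.map L) m)) :=
          measure_mono fun u hu => ⟨hu.2.1, hu.1⟩
      _ = ENNReal.ofReal (cdf (P.map L) m) := by rw [Real.volume_Ioc, sub_zero]
  · calc ENNReal.ofReal (cdf (P.map L) m) = volume (Ioo 0 (cdf (P.map L) m)) := by
          rw [Real.volume_Ioo, sub_zero]
      _ ≤ volume (Iic (cdf (P.map L) m) ∩ Ioo 0 1) :=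
          measure_mono fun u hu => ⟨hu.2.le, hu.1, hu.2.trans_le (cdf_le_one _ m)⟩

theorem intervalIntegral_comp_leftQuantile (hL : AEMeasurable L P) {g : ℝ → ℝ}
    (hg : Measurable g) :
    ∫ u in 0..1, g (leftQuantile P L u) = ∫ ω, g (L ω) ∂P := by
  rw [intervalIntegral.integral_of_le zero_le_one,
    ← integral_map (aemeasurable_leftQuantile_s6 hL) hg.aestronglyMeasurable, map_leftQuantile_s6 hL,
    integral_map hL hg.aestronglyMeasurable]

theorem intervalIntegral_leftQuantile (hL : AEMeasurable L P) :
    ∫ u in 0..1, leftQuantile P L u = ∫ ω, L ω ∂P :=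
  intervalIntegral_comp_leftQuantile hL measurable_id

theorem intervalIntegrable_leftQuantile (hL : Integrable L P) :
    IntervalIntegrable (leftQuantile P L) volume 0 1 := by
  rw [intervalIntegrable_iff_integrableOn_Ioc_of_le zero_le_one, IntegrableOn]
  have hid := (integrable_map_measure aestronglyMeasurable_id hL.aemeasurable).2 hL
  rw [← map_leftQuantile_s6 hL.aemeasurable] at hid
  exact (integrable_map_measure aestronglyMeasurable_id
    (aemeasurable_leftQuantile_s6 hL.aemeasurable)).1 hid

theorem intervalIntegral_leftQuantile_sub (hL : Integrable L P) (e : ℝ) {t : ℝ}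
    (ht : t ∈ unitInterval) :
    ∫ u in t..1, (leftQuantile P L u - e) =
      (∫ u in t..1, leftQuantile P L u) - (1 - t) * e := by
  rw [intervalIntegral.integral_sub
    ((intervalIntegrable_leftQuantile hL).mono_unitInterval ht unitInterval.one_mem)
    intervalIntegrable_const, intervalIntegral.integral_const, smul_eq_mul]

theorem integral_max_sub_eq_intervalIntegral_leftQuantile (hL : Integrable L P) (e : ℝ) :
    ∫ ω, max (L ω - e) 0 ∂P = ∫ u in cdf (P.map L) e..1, (leftQuantile P L u - e) := by
  rw [← intervalIntegral_comp_leftQuantile hL.aemeasurable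
    (g := fun x => max (x - e) 0) (by fun_prop)]
  exact intervalIntegral_max_zero_eq_of_nonpos_iff
    ((intervalIntegrable_leftQuantile hL).sub intervalIntegrable_const)
    ⟨cdf_nonneg _ e, cdf_le_one _ e⟩
    fun u hu => sub_nonpos.trans (leftQuantile_le_iff_s6 hL.aemeasurable hu)

theorem intervalIntegral_leftQuantile_sub_le_integral_max (hL : Integrable L P) (e : ℝ)
    {t : ℝ} (ht : t ∈ unitInterval) :
    ∫ u in t..1, (leftQuantile P L u - e) ≤ ∫ ω, max (L ω - e) 0 ∂P := by
  rw [integral_max_sub_eq_intervalIntegral_leftQuantile hL e]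
  exact intervalIntegral_le_of_nonpos_iff
    ((intervalIntegrable_leftQuantile hL).sub intervalIntegrable_const)
    ⟨cdf_nonneg _ e, cdf_le_one _ e⟩
    (fun u hu => sub_nonpos.trans (leftQuantile_le_iff_s6 hL.aemeasurable hu)) ht

end LeftQuantile

theorem one_sub_mul_ES {Ω : Type*} [MeasurableSpace Ω] (P : Measure Ω) (L : Ω → ℝ) {t : ℝ}
    (ht : t ≠ 1) : (1 - t) * ES P L t = ∫ u in t..1, leftQuantile P L u := by
  rw [ES, ← mul_assoc, mul_inv_cancel₀ (sub_ne_zero.2 ht.symm), one_mul]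

namespace IsExpectile

variable {Ω : Type*} [MeasurableSpace Ω] {P : Measure Ω} [IsProbabilityMeasure P]
  {L : Ω → ℝ} {α e : ℝ}

theorem two_mul_sub_one_mul_integral_max_eq (he : IsExpectile P L α e)
    (hL : Integrable L P) (hmean : ∫ ω, L ω ∂P = 0) :
    (2 * α - 1) * ∫ ω, max (L ω - e) 0 ∂P = (1 - α) * e := by
  have hpos : Integrable (fun ω => max (L ω - e) 0) P := (hL.sub (integrable_const e)).pos_part
  have hneg : Integrable (fun ω => max (e - L ω) 0) P := ((integrable_const e).sub hL).pos_part
  have hdiff : ∫ ω, max (L ω - e) 0 ∂P - ∫ ω, max (e - L ω) 0 ∂P = -e := by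
    rw [← integral_sub hpos hneg]
    simp_rw [← neg_sub _ e, max_zero_sub_max_neg_zero_eq_self]
    rw [integral_sub hL (integrable_const e), hmean]
    simp
  unfold IsExpectile at he
  linear_combination he - (1 - α) * hdiff

theorem two_mul_sub_one_mul_intervalIntegral_le (he : IsExpectile P L α e)
    (hL : Integrable L P) (hmean : ∫ ω, L ω ∂P = 0) (hα : 1 / 2 ≤ α) {t : ℝ}
    (ht : t ∈ unitInterval) :
    (2 * α - 1) * ∫ u in t..1, leftQuantile P L u ≤ (α + (1 - 2 * α) * t) * e := by
  have hmax := intervalIntegral_leftQuantile_sub_le_integral_max hL e ht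
  rw [intervalIntegral_leftQuantile_sub hL e ht] at hmax
  nlinarith [mul_le_mul_of_nonneg_left hmax (by linarith : (0 : ℝ) ≤ 2 * α - 1),
    he.two_mul_sub_one_mul_integral_max_eq hL hmean]

theorem mul_le_intervalIntegral (he : IsExpectile P L α e) (hL : Integrable L P)
    (hmean : ∫ ω, L ω ∂P = 0) (hα : 1 / 2 ≤ α) (hα1 : α < 1) :
    α * (1 - α) * e ≤ (2 * α - 1) * ∫ u in α..1, leftQuantile P L u := by
  have hmono : MonotoneOn (fun u => leftQuantile P L u - e) (Ioo 0 1) := fun _ hu _ hv huv =>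
    sub_le_sub_right (monotoneOn_leftQuantile_s6 hL.aemeasurable hu hv huv) e
  have hmax := integral_max_sub_eq_intervalIntegral_leftQuantile hL e
  have hexp := he.two_mul_sub_one_mul_integral_max_eq hL hmean
  have hpos : 0 ≤ ∫ u in cdf (P.map L) e..1, (leftQuantile P L u - e) :=
    hmax ▸ integral_nonneg fun _ => le_max_right _ _
  have hbal : (2 * α - 1) * (∫ u in cdf (P.map L) e..1, (leftQuantile P L u - e)) +
      (1 - α) * ∫ u in 0..1, (leftQuantile P L u - e) = 0 := by
    rw [← hmax, intervalIntegral_leftQuantile_sub hL e unitInterval.zero_mem,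
      intervalIntegral_leftQuantile hL.aemeasurable, hmean]
    linear_combination hexp
  have hconcave := hmono.one_sub_mul_le_intervalIntegral
    ((intervalIntegrable_leftQuantile hL).sub intervalIntegrable_const)
    ⟨cdf_nonneg _ e, cdf_le_one _ e⟩ (by linarith) hα1 hpos hbal
  rw [← hmax, intervalIntegral_leftQuantile_sub hL e ⟨by linarith, hα1.le⟩] at hconcave
  nlinarith [mul_le_mul_of_nonneg_left hconcave (by linarith : (0 : ℝ) ≤ 2 * α - 1)]

end IsExpectile

/-- for centered `L` and every `0 < β < 1`,
`(1 - (1-α)/(α+(1-2α)β))·ES_β(L) ≤ e_α(L) ≤ (1-(1-α)/α)·ES_α(L) ≤ ES_{(2α-1)/α}(L)`. -/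
theorem expectile_bounds {Ω : Type*} [MeasurableSpace Ω] (P : Measure Ω)
    [IsProbabilityMeasure P] (L : Ω → ℝ) (hL : Integrable L P)
    (hmean : (∫ ω, L ω ∂P) = 0) (α : ℝ) (hα : 1 / 2 ≤ α) (hα1 : α < 1)
    (β : ℝ) (hβ : 0 < β) (hβ1 : β < 1) (e : ℝ) (he : IsExpectile P L α e) :
    (1 - (1 - α) / (α + (1 - 2 * α) * β)) * ES P L β ≤ e ∧
      e ≤ (1 - (1 - α) / α) * ES P L α ∧
      (1 - (1 - α) / α) * ES P L α ≤ ES P L ((2 * α - 1) / α) := by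
  have hα0 : 0 < α := by linarith
  have hd : 0 < α + (1 - 2 * α) * β := by nlinarith
  have hγ0 : 0 ≤ (2 * α - 1) / α := div_nonneg (by linarith) hα0.le
  have hγα : (2 * α - 1) / α ≤ α := by rw [div_le_iff₀ hα0]; nlinarith
  have hlower := he.two_mul_sub_one_mul_intervalIntegral_le hL hmean hα ⟨hβ.le, hβ1.le⟩
  have hmiddle := he.mul_le_intervalIntegral hL hmean hα hα1
  have hupper := MonotoneOn.mul_intervalIntegral_le_of_intervalIntegral_eq_zero
    (monotoneOn_leftQuantile_s6 hL.aemeasurable) (intervalIntegrable_leftQuantile hL)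
    ((intervalIntegral_leftQuantile hL.aemeasurable).trans hmean) hγ0 hγα hα1.le
  rw [← one_sub_mul_ES P L hβ1.ne] at hlower
  rw [← one_sub_mul_ES P L hα1.ne] at hmiddle hupper
  rw [← one_sub_mul_ES P L (hγα.trans_lt hα1).ne] at hupper
  have hcoef : 1 - (1 - α) / α = (2 * α - 1) / α := by field_simp; ring
  refine ⟨?_, ?_, ?_⟩
  · rw [show 1 - (1 - α) / (α + (1 - 2 * α) * β) =
        (2 * α - 1) * (1 - β) / (α + (1 - 2 * α) * β) by
          rw [eq_div_iff hd.ne', sub_mul, div_mul_cancel₀ _ hd.ne']; ring,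
      div_mul_eq_mul_div, div_le_iff₀ hd]
    linarith
  · rw [hcoef, div_mul_eq_mul_div, le_div_iff₀ hα0]
    nlinarith
  · have hγ : α * (1 - (2 * α - 1) / α) = 1 - α := by field_simp; ring
    rw [hcoef]
    rw [← mul_assoc α, hγ, mul_left_comm] at hupper
    exact le_of_mul_le_mul_left hupper (by linarith)
end

section
/- Let L, L_1, …, L_d be integrable real random variables on a probability space (Ω,𝓕,P) with L = L_1 + ⋯ + L_d, let 1/2 ≤ α < 1, write e = e_α(L) and β* = P[L ≤ e], and assume P[L > e] > 0. Then for each k = 1, …, d, the Euler contribution of L_k to the expectile, (α·E[L_k·1_{L>e}] + (1−α)·E[L_k·1_{L≤e}]) / (α + (1−2α)β*), equals (1 − (1−α)/(α + (1−2α)β*))·E[L_k | L > e] + ((1−α)/(α + (1−2α)β*))·E[L_k]. -/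
open MeasureTheory Filter Topology Real Set
open scoped ENNReal

/-! With `p = P[L > e]` one has `E[L_k 1_{L>e}] = p · E[L_k | L > e]` and
`E[L_k] = E[L_k 1_{L>e}] + E[L_k 1_{L≤e}]`. The normalizer is
`α + (1 - 2α)(1 - p) = (1 - α) + (2α - 1)p`, positive for `1/2 ≤ α < 1`, so
`1 - (1 - α) / normalizer = (2α - 1)p / normalizer`; substituting, the right-hand side collapses
to `(α E[L_k 1_{L>e}] + (1 - α) E[L_k 1_{L≤e}]) / normalizer`. -/

theorem setAverage_eq_setIntegral_div {α : Type*} [MeasurableSpace α] (μ : Measure α)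
    (f : α → ℝ) (s : Set α) : ⨍ x in s, f x ∂μ = (∫ x in s, f x ∂μ) / μ.real s := by
  rw [setAverage_eq, smul_eq_mul, inv_mul_eq_div]

theorem expectile_normalizer_pos {α p : ℝ} (hα : 1 / 2 ≤ α) (hα1 : α < 1) (hp : 0 ≤ p) :
    0 < α + (1 - 2 * α) * (1 - p) := by
  nlinarith

theorem expectile_euler_weights_eq {α p c B : ℝ} (hD : α + (1 - 2 * α) * (1 - p) ≠ 0) :
    (α * (p * c) + (1 - α) * B) / (α + (1 - 2 * α) * (1 - p)) =
      (1 - (1 - α) / (α + (1 - 2 * α) * (1 - p))) * c +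
        (1 - α) / (α + (1 - 2 * α) * (1 - p)) * (p * c + B) := by
  rw [one_sub_div hD]
  field_simp
  ring

theorem expectile_weighted_setIntegral_eq {Ω : Type*} [MeasurableSpace Ω] {P : Measure Ω}
    [IsProbabilityMeasure P] {s : Set Ω} (hs : NullMeasurableSet s P) {f : Ω → ℝ}
    (hf : Integrable f P) {α : ℝ} (hα : 1 / 2 ≤ α) (hα1 : α < 1) :
    (α * ∫ ω in s, f ω ∂P + (1 - α) * ∫ ω in sᶜ, f ω ∂P) /
        (α + (1 - 2 * α) * P.real sᶜ) =
      (1 - (1 - α) / (α + (1 - 2 * α) * P.real sᶜ)) * ⨍ ω in s, f ω ∂P +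
        (1 - α) / (α + (1 - 2 * α) * P.real sᶜ) * ∫ ω, f ω ∂P := by
  rw [probReal_compl_eq_one_sub₀ hs, ← integral_add_compl₀ hs hf,
    ← measure_smul_setAverage f (measure_ne_top P s), smul_eq_mul]
  exact expectile_euler_weights_eq (expectile_normalizer_pos hα hα1 measureReal_nonneg).ne'

theorem expectile_euler_contribution_general {Ω : Type*} [MeasurableSpace Ω] (P : Measure Ω)
    [IsProbabilityMeasure P] (d : ℕ) (Lk : Fin d → Ω → ℝ)
    (hLk : ∀ k, Integrable (Lk k) P) (L : Ω → ℝ)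
    (hLdef : L = fun ω => ∑ k, Lk k ω)
    (α : ℝ) (hα : 1 / 2 ≤ α) (hα1 : α < 1) (e : ℝ) (k : Fin d) :
    (α * ∫ ω in {ω | e < L ω}, Lk k ω ∂P +
        (1 - α) * ∫ ω in {ω | L ω ≤ e}, Lk k ω ∂P) /
      (α + (1 - 2 * α) * (P {ω | L ω ≤ e}).toReal) =
    (1 - (1 - α) / (α + (1 - 2 * α) * (P {ω | L ω ≤ e}).toReal)) *
        ((∫ ω in {ω | e < L ω}, Lk k ω ∂P) / (P {ω | e < L ω}).toReal) +
      ((1 - α) / (α + (1 - 2 * α) * (P {ω | L ω ≤ e}).toReal)) * ∫ ω, Lk k ω ∂P := by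
  have hL : Integrable L P := hLdef ▸ integrable_finsetSum _ fun j _ => hLk j
  have hs : NullMeasurableSet {ω | e < L ω} P :=
    nullMeasurableSet_lt aemeasurable_const hL.aemeasurable
  have hcompl : {ω | L ω ≤ e} = {ω | e < L ω}ᶜ := by
    ext ω
    simp
  simp only [← measureReal_def, ← setAverage_eq_setIntegral_div, hcompl]
  exact expectile_weighted_setIntegral_eq hs (hLk k) hα hα1

/-- the Euler contribution of `L_k` to the expectile equals
`(1 - (1-α)/(α+(1-2α)β*))·E[L_k | L > e] + ((1-α)/(α+(1-2α)β*))·E[L_k]`,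
where `e = e_α(L)` and `β* = P[L ≤ e]`. -/
theorem expectile_euler_contribution {Ω : Type*} [MeasurableSpace Ω] (P : Measure Ω)
    [IsProbabilityMeasure P] (d : ℕ) (Lk : Fin d → Ω → ℝ)
    (hLk : ∀ k, Integrable (Lk k) P) (L : Ω → ℝ)
    (hLdef : L = fun ω => ∑ k, Lk k ω)
    (α : ℝ) (hα : 1 / 2 ≤ α) (hα1 : α < 1) (e : ℝ) (he : IsExpectile P L α e)
    (hpos : 0 < (P {ω | e < L ω}).toReal) (k : Fin d) :
    (α * ∫ ω in {ω | e < L ω}, Lk k ω ∂P +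
        (1 - α) * ∫ ω in {ω | L ω ≤ e}, Lk k ω ∂P) /
      (α + (1 - 2 * α) * (P {ω | L ω ≤ e}).toReal) =
    (1 - (1 - α) / (α + (1 - 2 * α) * (P {ω | L ω ≤ e}).toReal)) *
        ((∫ ω in {ω | e < L ω}, Lk k ω ∂P) / (P {ω | e < L ω}).toReal) +
      ((1 - α) / (α + (1 - 2 * α) * (P {ω | L ω ≤ e}).toReal)) * ∫ ω, Lk k ω ∂P :=
  expectile_euler_contribution_general P d Lk hLk L hLdef α hα hα1 e k
end
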